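/- arXiv:math/0604451 — 10 statements merged into one kernel-verified Lean document; each statement's English description precedes it below -/
import Mathlib

section
/- If a topological space X has the Menger property Sfin(𝒪,𝒪) and K is a σ-compact topological space, then the product space X × K has the Menger property Sfin(𝒪,𝒪). -/
open Set Filter

/-- A topological space `X` has the Menger property `Sfin(𝒪,𝒪)`: for every sequence of
countable open covers of `X` there are finite subfamilies whose union covers `X`. -/
def Menger (X : Type*) [TopologicalSpace X] : Prop :=
  ∀ 𝒰 : ℕ → Set (Set X),
    (∀ n, (𝒰 n).Countable ∧ (∀ U ∈ 𝒰 n, IsOpen U) ∧ ⋃₀ 𝒰 n = Set.univ) →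
    ∃ ℱ : ℕ → Set (Set X), (∀ n, ℱ n ⊆ 𝒰 n ∧ (ℱ n).Finite) ∧ ⋃₀ (⋃ n, ℱ n) = Set.univ

/-- Key lemma: if `X` is Menger and `C ⊆ K` compact, then for any sequence of countable open
covers of `X × K`, finite subfamilies can be chosen covering `X × C`. -/
theorem menger_prod_compact_aux {X K : Type*} [TopologicalSpace X] [TopologicalSpace K]
    (hX : Menger X) {C : Set K} (hC : IsCompact C) (𝒰 : ℕ → Set (Set (X × K)))
    (h𝒰 : ∀ n, (𝒰 n).Countable ∧ (∀ U ∈ 𝒰 n, IsOpen U) ∧ ⋃₀ 𝒰 n = Set.univ) :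
    ∃ ℱ : ℕ → Set (Set (X × K)), (∀ n, ℱ n ⊆ 𝒰 n ∧ (ℱ n).Finite) ∧
      univ ×ˢ C ⊆ ⋃₀ (⋃ n, ℱ n) := by
  classical
  -- W F : set of points x such that a neighborhood of x times C is covered by F
  set W : Set (Set (X × K)) → Set X :=
    fun F => {x | ∃ V : Set X, IsOpen V ∧ x ∈ V ∧ V ×ˢ C ⊆ ⋃₀ F} with hW
  have hWopen : ∀ F, IsOpen (W F) := by
    intro F
    rw [isOpen_iff_forall_mem_open]
    rintro x ⟨V, hVo, hxV, hVC⟩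
    exact ⟨V, fun y hy => ⟨V, hVo, hy, hVC⟩, hVo, hxV⟩
  set 𝒱 : ℕ → Set (Set X) := fun n => W '' {F | F.Finite ∧ F ⊆ 𝒰 n} with h𝒱
  have h𝒱props : ∀ n, (𝒱 n).Countable ∧ (∀ U ∈ 𝒱 n, IsOpen U) ∧ ⋃₀ 𝒱 n = Set.univ := by
    intro n
    obtain ⟨hcnt, hop, hcov⟩ := h𝒰 n
    refine ⟨(countable_setOf_finite_subset hcnt).image _, ?_, ?_⟩
    · rintro U ⟨F, -, rfl⟩; exact hWopen F
    · apply eq_univ_of_forall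
      intro x
      -- {x} ×ˢ C is compact and covered by 𝒰 n
      have hxC : IsCompact (({x} : Set X) ×ˢ C) := isCompact_singleton.prod hC
      have hcov' : ({x} : Set X) ×ˢ C ⊆ ⋃ U : 𝒰 n, (U : Set (X × K)) := by
        intro p _
        have : p ∈ ⋃₀ 𝒰 n := hcov ▸ mem_univ p
        obtain ⟨U, hU, hpU⟩ := this
        exact mem_iUnion.2 ⟨⟨U, hU⟩, hpU⟩
      obtain ⟨t, ht⟩ := hxC.elim_finite_subcover (fun U : 𝒰 n => (U : Set (X × K)))
        (fun U => hop U U.2) hcov'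
      set F : Set (Set (X × K)) := (fun U : 𝒰 n => (U : Set (X × K))) '' t with hF
      have hFfin : F.Finite := t.finite_toSet.image _
      have hFsub : F ⊆ 𝒰 n := by rintro U ⟨V, -, rfl⟩; exact V.2
      have hFcov : ({x} : Set X) ×ˢ C ⊆ ⋃₀ F := by
        intro p hp
        obtain ⟨U, hUt, hpU⟩ := mem_iUnion₂.1 (ht hp)
        exact ⟨U, ⟨U, hUt, rfl⟩, hpU⟩
      obtain ⟨u, v, huo, -, hxu, hCv, huv⟩ := generalized_tube_lemma isCompact_singleton hC
        (isOpen_sUnion fun U hU => hop U (hFsub hU)) hFcov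
      refine ⟨W F, ⟨F, ⟨hFfin, hFsub⟩, rfl⟩, ?_⟩
      exact ⟨u, huo, hxu (mem_singleton x), fun p hp => huv ⟨hp.1, hCv hp.2⟩⟩
  obtain ⟨𝒢, h𝒢sub, h𝒢cov⟩ := hX 𝒱 h𝒱props
  -- pick, for each G ∈ 𝒢 n, a finite F with W F = G
  have pick : ∀ n, ∀ G ∈ 𝒢 n, ∃ F, (F.Finite ∧ F ⊆ 𝒰 n) ∧ W F = G := by
    intro n G hG
    obtain ⟨F, hF, rfl⟩ := (h𝒢sub n).1 hG
    exact ⟨F, hF, rfl⟩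
  choose f hf using pick
  set ℱ : ℕ → Set (Set (X × K)) := fun n => ⋃ G ∈ 𝒢 n, f n G ‹_› with hℱ
  refine ⟨ℱ, ?_, ?_⟩
  · intro n
    constructor
    · simp only [hℱ, iUnion_subset_iff]
      intro G hG
      exact (hf n G hG).1.2
    · exact Set.Finite.biUnion' (h𝒢sub n).2 fun G hG => (hf n G hG).1.1
  · rintro ⟨x, k⟩ ⟨-, hk⟩
    have : x ∈ ⋃₀ ⋃ n, 𝒢 n := h𝒢cov ▸ mem_univ x
    obtain ⟨G, hG, hxG⟩ := this
    obtain ⟨n, hGn⟩ := mem_iUnion.1 hG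
    have hWF : x ∈ W (f n G hGn) := by rw [(hf n G hGn).2]; exact hxG
    obtain ⟨V, -, hxV, hVC⟩ := hWF
    obtain ⟨U, hU, hpU⟩ := hVC (show (x, k) ∈ V ×ˢ C from ⟨hxV, hk⟩)
    exact ⟨U, mem_iUnion.2 ⟨n, mem_iUnion₂.2 ⟨G, hGn, hU⟩⟩, hpU⟩

/-- If `X` has the Menger property and `K` is σ-compact, then `X × K` has the Menger
property. -/
theorem stmt1 (X K : Type*) [TopologicalSpace X] [TopologicalSpace K]
    (hX : Menger X) (hK : SigmaCompactSpace K) : Menger (X × K) := by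
  classical
  intro 𝒰 h𝒰
  set e : ℕ × ℕ ≃ ℕ := Nat.pairEquiv with he
  have key : ∀ m : ℕ, ∃ ℱ : ℕ → Set (Set (X × K)),
      (∀ n, ℱ n ⊆ 𝒰 (e (m, n)) ∧ (ℱ n).Finite) ∧
      univ ×ˢ (compactCovering K m) ⊆ ⋃₀ (⋃ n, ℱ n) := by
    intro m
    exact menger_prod_compact_aux hX (isCompact_compactCovering K m)
      (fun n => 𝒰 (e (m, n))) (fun n => h𝒰 (e (m, n)))
  choose ℱ' hℱ'sub hℱ'cov using key
  refine ⟨fun j => ℱ' (e.symm j).1 (e.symm j).2, ?_, ?_⟩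
  · intro j
    have := hℱ'sub (e.symm j).1 (e.symm j).2
    rwa [Prod.mk.eta, e.apply_symm_apply] at this
  · apply eq_univ_of_forall
    rintro ⟨x, k⟩
    have hk : k ∈ ⋃ m, compactCovering K m := by
      rw [iUnion_compactCovering]; exact mem_univ k
    obtain ⟨m, hkm⟩ := mem_iUnion.1 hk
    obtain ⟨U, hU, hpU⟩ := hℱ'cov m (show (x, k) ∈ univ ×ˢ compactCovering K m from ⟨mem_univ x, hkm⟩)
    obtain ⟨n, hUn⟩ := mem_iUnion.1 hU
    refine ⟨U, mem_iUnion.2 ⟨e (m, n), ?_⟩, hpU⟩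
    simpa using hUn
end

section
/- Assume G ⊆ [ℕ]^∞ contains all almost subsets of its elements (if a ∈ G, b is infinite and b ⊆* a, then b ∈ G). Then G is groupwise dense if, and only if, for each increasing h ∈ ℕ^ℕ, ([ℕ]^∞ ∖ G)/h ≠ [ℕ]^∞. -/
open Set Filter

/-- For `a ⊆ ℕ` and an interval partition given by increasing `h` (with `h 0 = 0`),
`divH a h = {n : a ∩ [h n, h (n+1)) ≠ ∅}`. -/
def divH (a : Set ℕ) (h : ℕ → ℕ) : Set ℕ := {n | (a ∩ Set.Ico (h n) (h (n + 1))).Nonempty}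

/-- `G ⊆ [ℕ]^∞` is groupwise dense: it contains all (infinite) almost subsets of its
elements, and for each partition of `ℕ` into finite intervals there is an infinite set of
intervals of the partition whose union belongs to `G`. -/
def GroupwiseDense (G : Set (Set ℕ)) : Prop :=
  (∀ a ∈ G, a.Infinite) ∧
  (∀ a ∈ G, ∀ b : Set ℕ, b.Infinite → (b \ a).Finite → b ∈ G) ∧
  (∀ h : ℕ → ℕ, StrictMono h → h 0 = 0 →
    ∃ a : Set ℕ, a.Infinite ∧ (⋃ n ∈ a, Set.Ico (h n) (h (n + 1))) ∈ G)

lemma interval_exists (h : ℕ → ℕ) (hm : StrictMono h) (h0 : h 0 = 0) (k : ℕ) :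
    ∃ n, h n ≤ k ∧ k < h (n + 1) := by
  have hex : ∃ n, k < h (n + 1) := ⟨k, lt_of_lt_of_le (Nat.lt_succ_self k) hm.le_apply⟩
  refine ⟨Nat.find hex, ?_, Nat.find_spec hex⟩
  rcases Nat.eq_zero_or_pos (Nat.find hex) with h1 | h1
  · rw [h1, h0]; exact Nat.zero_le k
  · have := Nat.find_min hex (Nat.sub_lt h1 one_pos)
    push_neg at this
    have h2 : Nat.find hex - 1 + 1 = Nat.find hex := Nat.succ_pred_eq_of_pos h1
    rwa [h2] at this

lemma interval_unique (h : ℕ → ℕ) (hm : StrictMono h) {m n k : ℕ}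
    (h1 : h m ≤ k) (h2 : k < h (m + 1)) (h3 : h n ≤ k) (h4 : k < h (n + 1)) : m = n := by
  rcases lt_trichotomy m n with hlt | he | hgt
  · exact absurd h2 (not_lt.mpr ((hm.monotone (Nat.succ_le_of_lt hlt)).trans h3))
  · exact he
  · exact absurd h4 (not_lt.mpr ((hm.monotone (Nat.succ_le_of_lt hgt)).trans h1))

lemma divH_infinite (h : ℕ → ℕ) (hm : StrictMono h) (h0 : h 0 = 0) {a : Set ℕ}
    (ha : a.Infinite) : (divH a h).Infinite := by
  apply Set.infinite_of_not_bddAbove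
  rintro ⟨N, hN⟩
  obtain ⟨k, hk, hk2⟩ := ha.exists_gt (h (N + 1))
  obtain ⟨n, hn1, hn2⟩ := interval_exists h hm h0 k
  have hmem : n ∈ divH a h := ⟨k, hk, hn1, hn2⟩
  have hNn : n ≤ N := hN hmem
  have : k < h (N + 1) := lt_of_lt_of_le hn2 (hm.monotone (Nat.succ_le_succ hNn))
  omega

lemma divH_union (h : ℕ → ℕ) (hm : StrictMono h) (b : Set ℕ) :
    divH (⋃ n ∈ b, Set.Ico (h n) (h (n + 1))) h = b := by
  ext n
  constructor
  · rintro ⟨k, hk, hn1, hn2⟩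
    simp only [Set.mem_iUnion, Set.mem_Ico] at hk
    obtain ⟨m, hmb, hk1, hk2⟩ := hk
    rwa [← interval_unique h hm hk1 hk2 hn1 hn2]
  · intro hn
    exact ⟨h n, Set.mem_biUnion hn ⟨le_refl _, hm (Nat.lt_succ_self n)⟩,
      le_refl _, hm (Nat.lt_succ_self n)⟩

/-- If `G ⊆ [ℕ]^∞` contains all almost subsets of its elements, then `G` is groupwise
dense iff for each increasing `h`, `([ℕ]^∞ ∖ G)/h ≠ [ℕ]^∞`. -/
theorem stmt3 (G : Set (Set ℕ)) (hinf : ∀ a ∈ G, a.Infinite)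
    (hcl : ∀ a ∈ G, ∀ b : Set ℕ, b.Infinite → (b \ a).Finite → b ∈ G) :
    GroupwiseDense G ↔
      ∀ h : ℕ → ℕ, StrictMono h → h 0 = 0 →
        (fun a => divH a h) '' ({a : Set ℕ | a.Infinite} \ G) ≠ {a : Set ℕ | a.Infinite} := by
  constructor
  · rintro ⟨-, -, hgd⟩ h hm h0 heq
    obtain ⟨a, ha, hU⟩ := hgd h hm h0
    have hmem : a ∈ (fun a => divH a h) '' ({a : Set ℕ | a.Infinite} \ G) := by
      rw [heq]; exact ha
    obtain ⟨c, ⟨hcinf, hcG⟩, hch⟩ := hmem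
    apply hcG
    apply hcl _ hU c hcinf
    have hsub : c ⊆ ⋃ n ∈ a, Set.Ico (h n) (h (n + 1)) := by
      intro k hk
      obtain ⟨n, hn1, hn2⟩ := interval_exists h hm h0 k
      have hch' : divH c h = a := hch
      have hmem2 : n ∈ divH c h := ⟨k, hk, hn1, hn2⟩
      rw [hch'] at hmem2
      exact Set.mem_biUnion hmem2 ⟨hn1, hn2⟩
    rw [Set.diff_eq_empty.mpr hsub]
    exact Set.finite_empty
  · intro H
    refine ⟨hinf, hcl, fun h hm h0 => ?_⟩
    have hne := H h hm h0
    have hsub : (fun a => divH a h) '' ({a : Set ℕ | a.Infinite} \ G) ⊆ {a | a.Infinite} := by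
      rintro _ ⟨c, ⟨hc, -⟩, rfl⟩
      exact divH_infinite h hm h0 hc
    obtain ⟨b, hb, hbni⟩ := Set.exists_of_ssubset (hsub.ssubset_of_ne hne)
    have hbinf : b.Infinite := hb
    have hUinf : (⋃ n ∈ b, Set.Ico (h n) (h (n + 1))).Infinite := by
      apply (hbinf.image (hm.injective.injOn)).mono
      rintro _ ⟨n, hn, rfl⟩
      exact Set.mem_biUnion hn ⟨le_refl _, hm (Nat.lt_succ_self n)⟩
    have hUG : (⋃ n ∈ b, Set.Ico (h n) (h (n + 1))) ∈ G := by
      by_contra hUG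
      exact hbni ⟨_, ⟨hUinf, hUG⟩, divH_union h hm b⟩
    exact ⟨b, hbinf, hUG⟩
end

section
/- Assume that a set of reals X has the Menger property Sfin(𝒪,𝒪). Then for every continuous map Ψ : X → ℕ^ℕ with image Y = Ψ[X], the family G = {a ∈ [ℕ]^∞ : for all f ∈ Y, ¬(next_a ≤* f)} is groupwise dense. -/
open Set Filter

/-- A subset `S` of a topological space has the Menger property `Sfin(𝒪,𝒪)`. -/
def MengerSet {α : Type*} [TopologicalSpace α] (S : Set α) : Prop :=
  ∀ 𝒰 : ℕ → Set (Set α),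
    (∀ n, (𝒰 n).Countable ∧ (∀ U ∈ 𝒰 n, IsOpen U) ∧ S ⊆ ⋃₀ 𝒰 n) →
    ∃ ℱ : ℕ → Set (Set α), (∀ n, ℱ n ⊆ 𝒰 n ∧ (ℱ n).Finite) ∧ S ⊆ ⋃₀ ⋃ n, ℱ n

/-- For an infinite `a ⊆ ℕ`, `nextFun a n = min {k ∈ a : n < k}`. -/
noncomputable def nextFun (a : Set ℕ) (n : ℕ) : ℕ := sInf {k | k ∈ a ∧ n < k}

/-- If a set of reals `X` has the Menger property, then for every continuous
`Ψ : X → ℕ^ℕ` with image `Y`, the family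
`G = {a ∈ [ℕ]^∞ : ∀ f ∈ Y, ¬(next_a ≤* f)}` is groupwise dense. -/
theorem stmt4 (X : Set ℝ) (hX : MengerSet X) (Ψ : X → ℕ → ℕ) (hΨ : Continuous Ψ) :
    GroupwiseDense {a : Set ℕ | a.Infinite ∧
      ∀ f ∈ Set.range Ψ, ¬ ∀ᶠ n in Filter.atTop, nextFun a n ≤ f n} := by
  classical
  refine ⟨fun a ha => ha.1, ?_, ?_⟩
  · -- almost-subset closure
    rintro a ⟨-, ha2⟩ b hbinf hba
    refine ⟨hbinf, fun f hf hev => ha2 f hf ?_⟩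
    obtain ⟨N, hN⟩ := hba.bddAbove
    rw [Filter.eventually_atTop] at hev ⊢
    obtain ⟨M, hM⟩ := hev
    refine ⟨max N M + 1, fun n hn => ?_⟩
    have hbne : {k | k ∈ b ∧ n < k}.Nonempty := by
      obtain ⟨m, hm, hm2⟩ := hbinf.exists_gt n
      exact ⟨m, hm, hm2⟩
    obtain ⟨hkb, hkn⟩ := Nat.sInf_mem hbne
    have hka : nextFun b n ∈ a := by
      by_contra hna
      have hmem : nextFun b n ∈ b \ a := ⟨hkb, hna⟩
      have := hN hmem
      have hnN : N < n := by omega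
      have : n < nextFun b n := hkn
      omega
    have h1 : nextFun a n ≤ nextFun b n := Nat.sInf_le ⟨hka, hkn⟩
    have h2 : nextFun b n ≤ f n := hM n (by omega)
    omega
  · -- groupwise density: the main part
    intro h hmono h0
    -- pick open sets in ℝ realizing the basic open sets of the covers
    have hVex : ∀ j m r : ℕ, ∃ t : Set ℝ, IsOpen t ∧
        (Subtype.val ⁻¹' t : Set ↥X) =
          {x : ↥X | (∀ i < h j, Ψ x i < h m) ∧ (∀ i < h m, Ψ x i < h r)} := by
      intro j m r
      apply isOpen_induced_iff.mp
      have heq : {x : ↥X | (∀ i < h j, Ψ x i < h m) ∧ (∀ i < h m, Ψ x i < h r)}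
          = (⋂ i ∈ Finset.range (h j), {x : ↥X | Ψ x i < h m}) ∩
            (⋂ i ∈ Finset.range (h m), {x : ↥X | Ψ x i < h r}) := by
        ext x
        simp [Finset.mem_range]
      rw [heq]
      refine IsOpen.inter ?_ ?_
      · apply isOpen_biInter_finset
        intro i _
        exact ((continuous_apply i).comp hΨ).isOpen_preimage (Set.Iio (h m)) (isOpen_discrete _)
      · apply isOpen_biInter_finset
        intro i _
        exact ((continuous_apply i).comp hΨ).isOpen_preimage (Set.Iio (h r)) (isOpen_discrete _)
    choose V hVopen hVpre using hVex
    set 𝒰 : ℕ → Set (Set ℝ) := fun j => (fun p : ℕ × ℕ => V j p.1 p.2) '' {p | j < p.1 ∧ p.1 < p.2}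
      with h𝒰
    have hcov : ∀ j, (𝒰 j).Countable ∧ (∀ U ∈ 𝒰 j, IsOpen U) ∧ X ⊆ ⋃₀ 𝒰 j := by
      intro j
      refine ⟨(Set.to_countable _).image _, ?_, ?_⟩
      · rintro U ⟨p, -, rfl⟩
        exact hVopen j p.1 p.2
      · intro x hx
        obtain ⟨m, hjm, hm⟩ : ∃ m, j < m ∧ ∀ i < h j, Ψ ⟨x, hx⟩ i < h m := by
          refine ⟨(Finset.range (h j)).sup (Ψ ⟨x, hx⟩) + j + 1, by omega, fun i hi => ?_⟩
          have h1 : Ψ ⟨x, hx⟩ i ≤ (Finset.range (h j)).sup (Ψ ⟨x, hx⟩) :=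
            Finset.le_sup (Finset.mem_range.mpr hi)
          have h2 : (Finset.range (h j)).sup (Ψ ⟨x, hx⟩) + j + 1
              ≤ h ((Finset.range (h j)).sup (Ψ ⟨x, hx⟩) + j + 1) := hmono.le_apply
          omega
        obtain ⟨r, hmr, hr⟩ : ∃ r, m < r ∧ ∀ i < h m, Ψ ⟨x, hx⟩ i < h r := by
          refine ⟨(Finset.range (h m)).sup (Ψ ⟨x, hx⟩) + m + 1, by omega, fun i hi => ?_⟩
          have h1 : Ψ ⟨x, hx⟩ i ≤ (Finset.range (h m)).sup (Ψ ⟨x, hx⟩) :=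
            Finset.le_sup (Finset.mem_range.mpr hi)
          have h2 : (Finset.range (h m)).sup (Ψ ⟨x, hx⟩) + m + 1
              ≤ h ((Finset.range (h m)).sup (Ψ ⟨x, hx⟩) + m + 1) := hmono.le_apply
          omega
        refine ⟨V j m r, ⟨(m, r), ⟨hjm, hmr⟩, rfl⟩, ?_⟩
        have hx2 : (⟨x, hx⟩ : ↥X) ∈ (Subtype.val ⁻¹' V j m r : Set ↥X) := by
          rw [hVpre j m r]
          exact ⟨hm, hr⟩
        exact hx2
    -- apply the Menger property to all shifted sequences of covers
    have hM : ∀ k : ℕ, ∃ ℱ : ℕ → Set (Set ℝ),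
        (∀ n, ℱ n ⊆ 𝒰 (n + k) ∧ (ℱ n).Finite) ∧ X ⊆ ⋃₀ ⋃ n, ℱ n :=
      fun k => hX (fun n => 𝒰 (n + k)) (fun n => hcov (n + k))
    choose ℱ hℱ hℱcov using hM
    -- extract index pairs from the selected sets
    have hpair : ∀ k n U, ∃ p : ℕ × ℕ, U ∈ ℱ k n →
        (n + k < p.1 ∧ p.1 < p.2) ∧ U = V (n + k) p.1 p.2 := by
      intro k n U
      by_cases hU : U ∈ ℱ k n
      · obtain ⟨p, hp, hpU⟩ := (hℱ k n).1 hU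
        exact ⟨p, fun _ => ⟨hp, hpU.symm⟩⟩
      · exact ⟨(0, 0), fun hc => absurd hc hU⟩
    choose pr hpr using hpair
    -- a bound on the second coordinates of pairs used at stage (k, n)
    have hRkex : ∀ k n, ∃ R, ∀ U ∈ ℱ k n, (pr k n U).2 ≤ R := by
      intro k n
      obtain ⟨R, hR⟩ := (((hℱ k n).2).image (fun U => (pr k n U).2)).bddAbove
      exact ⟨R, fun U hU => hR (Set.mem_image_of_mem _ hU)⟩
    choose Rk hRk using hRkex
    -- a monotone global bound
    obtain ⟨R', hR'ge, hR'mono, hRle⟩ : ∃ R' : ℕ → ℕ, (∀ j, j + 2 ≤ R' j) ∧ Monotone R' ∧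
        ∀ k n, Rk k n ≤ R' (n + k) := by
      refine ⟨fun j => j + 2 +
        (Finset.range (j + 1)).sup (fun k => (Finset.range (j + 1)).sup (fun n => Rk k n)),
        fun j => Nat.le_add_right (j + 2) _, ?_, ?_⟩
      · intro j1 j2 hj
        have hsub : Finset.range (j1 + 1) ⊆ Finset.range (j2 + 1) :=
          Finset.range_subset_range.mpr (by omega)
        have hs : (Finset.range (j1 + 1)).sup (fun k => (Finset.range (j1 + 1)).sup
              (fun n => Rk k n)) ≤
            (Finset.range (j2 + 1)).sup (fun k => (Finset.range (j2 + 1)).sup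
              (fun n => Rk k n)) := by
          apply Finset.sup_le
          intro k hk
          exact le_trans (Finset.sup_mono hsub)
            (Finset.le_sup (f := fun k => (Finset.range (j2 + 1)).sup (fun n => Rk k n)) (hsub hk))
        dsimp only
        omega
      · intro k n
        have h1 : Rk k n ≤ (Finset.range (n + k + 1)).sup (fun n' => Rk k n') :=
          Finset.le_sup (Finset.mem_range.mpr (by omega))
        have h2 : (Finset.range (n + k + 1)).sup (fun n' => Rk k n') ≤
            (Finset.range (n + k + 1)).sup
              (fun k' => (Finset.range (n + k + 1)).sup (fun n' => Rk k' n')) :=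
          Finset.le_sup (f := fun k' => (Finset.range (n + k + 1)).sup (fun n' => Rk k' n'))
            (Finset.mem_range.mpr (by omega))
        dsimp only
        omega
    -- the key witness property
    have hW : ∀ (x : ↥X) (k : ℕ), ∃ j, k ≤ j ∧ ∃ m r, j < m ∧ m < r ∧ r ≤ R' j ∧
        (∀ i < h j, Ψ x i < h m) ∧ (∀ i < h m, Ψ x i < h r) := by
      intro x k
      obtain ⟨U, hU, hxU⟩ := hℱcov k x.2
      rw [Set.mem_iUnion] at hU
      obtain ⟨n, hUn⟩ := hU
      obtain ⟨⟨hjm, hmr⟩, hUV⟩ := hpr k n U hUn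
      rw [hUV] at hxU
      have hx2 : x ∈ (Subtype.val ⁻¹' V (n + k) (pr k n U).1 (pr k n U).2 : Set ↥X) := hxU
      rw [hVpre] at hx2
      refine ⟨n + k, Nat.le_add_left k n, (pr k n U).1, (pr k n U).2, hjm, hmr, ?_, hx2.1, hx2.2⟩
      exact le_trans (hRk k n U hUn) (hRle k n)
    -- the sparse sequence of interval indices
    obtain ⟨c, hc0, hcs⟩ : ∃ c : ℕ → ℕ, c 0 = 1 ∧ ∀ i, c (i + 1) = R' (c i) + 1 :=
      ⟨fun i => Nat.rec 1 (fun _ prev => R' prev + 1) i, rfl, fun i => rfl⟩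
    have hcstep : ∀ i, c i + 2 < c (i + 1) := by
      intro i
      have := hR'ge (c i)
      have := hcs i
      omega
    have hcmono : StrictMono c := strictMono_nat_of_lt_succ (fun i => by have := hcstep i; omega)
    have hclb : ∀ i, i + 1 ≤ c i := by
      intro i
      induction i with
      | zero => omega
      | succ n ih => have := hcstep n; omega
    have hblock : ∀ j i1 i2, i1 < i2 → j ≤ c i1 → c i2 ≤ R' j → False := by
      intro j i1 i2 hlt h1 h2
      have e0 : R' j ≤ R' (c i1) := hR'mono h1
      have e1 := hcs i1
      have e2 : c (i1 + 1) ≤ c i2 := hcmono.monotone (by omega)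
      omega
    refine ⟨Set.range c, Set.infinite_range_of_injective hcmono.injective, ?_, ?_⟩
    · -- the union of the chosen intervals is infinite
      apply Set.infinite_of_injective_forall_mem (f := fun i => h (c i))
      · exact hmono.injective.comp hcmono.injective
      · intro i
        exact Set.mem_biUnion ⟨i, rfl⟩ ⟨le_refl _, hmono (Nat.lt_succ_self _)⟩
    · -- the main property
      rintro f ⟨x, rfl⟩ hev
      rw [Filter.eventually_atTop] at hev
      obtain ⟨N, hN⟩ := hev
      obtain ⟨j, hkj, m, r, hjm, hmr, hrR, hB1, hB2⟩ := hW x (c (N + 1) + 1)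
      -- the common final argument
      have final : ∀ cut e : ℕ, c (N + 1) < cut → (∀ i < h cut, Ψ x i < h e) →
          (∀ t, cut ≤ c t → e ≤ c t) → False := by
        intro cut e hNcut hB hgap
        have hex : ∃ i, cut ≤ c i := ⟨cut, le_trans (by omega) (hclb cut)⟩
        have hi1spec : cut ≤ c (Nat.find hex) := Nat.find_spec hex
        have hi1pos : 0 < Nat.find hex := by
          rcases Nat.eq_zero_or_pos (Nat.find hex) with h0 | hp
          · exfalso
            rw [h0, hc0] at hi1spec
            have := hclb (N + 1)
            omega
          · exact hp
        set istar := Nat.find hex - 1 with histardef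
        have histar : c istar < cut := by
          have := Nat.find_min hex (m := istar) (by omega)
          omega
        have histar2 : ∀ t, istar < t → cut ≤ c t := by
          intro t ht
          exact le_trans hi1spec (hcmono.monotone (by omega))
        have histarN : N + 1 ≤ istar := by
          by_contra hlt
          push_neg at hlt
          have h1 : c (istar + 1) ≤ c (N + 1) := hcmono.monotone (by omega)
          have h2 : cut ≤ c (istar + 1) := histar2 _ (Nat.lt_succ_self _)
          omega
        set p := c istar + 1 with hpdef
        have hgap2 : ∀ t, p ≤ c t → e ≤ c t := by
          intro t ht
          have htstar : istar < t := by
            by_contra hle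
            push_neg at hle
            have := hcmono.monotone hle
            omega
          exact hgap t (histar2 t htstar)
        set n' := h p - 1 with hn'def
        have hhp : 1 ≤ h p := le_trans (by omega) hmono.le_apply
        have hn'lt : n' < h cut := by
          have : h p ≤ h cut := hmono.monotone (by omega)
          omega
        have hfn' : Ψ x n' < h e := hB n' hn'lt
        have hn'N : N ≤ n' := by
          have hph : p ≤ h p := hmono.le_apply
          have hcl := hclb istar
          omega
        set A := ⋃ n ∈ Set.range c, Set.Ico (h n) (h (n + 1)) with hA
        have hne : {k | k ∈ A ∧ n' < k}.Nonempty := by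
          refine ⟨h (c (n' + 1)), ?_, ?_⟩
          · exact Set.mem_biUnion ⟨n' + 1, rfl⟩ ⟨le_refl _, hmono (Nat.lt_succ_self _)⟩
          · have h1 := hclb (n' + 1)
            have h2 : c (n' + 1) ≤ h (c (n' + 1)) := hmono.le_apply
            omega
        have hlow : ∀ k ∈ {k | k ∈ A ∧ n' < k}, h e ≤ k := by
          rintro k ⟨hkA, hkn⟩
          simp only [hA, Set.mem_iUnion, Set.mem_range, exists_prop, exists_exists_eq_and]
            at hkA
          obtain ⟨t, hk1, hk2⟩ := hkA
          have hk3 : h p ≤ k := by omega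
          have hpt : p ≤ c t := by
            by_contra hpc
            push_neg at hpc
            have : h (c t + 1) ≤ h p := hmono.monotone (by omega)
            omega
          have het := hgap2 t hpt
          have : h e ≤ h (c t) := hmono.monotone het
          omega
        have h5 : h e ≤ nextFun A n' := hlow _ (Nat.sInf_mem hne)
        have h6 := hN n' hn'N
        omega
      by_cases hcase : ∃ i, j ≤ c i ∧ c i < m
      · obtain ⟨i, hij, him⟩ := hcase
        refine final m r (by omega) hB2 ?_
        intro t hmt
        by_contra hrt
        push_neg at hrt
        have hit : i < t := hcmono.lt_iff_lt.mp (lt_of_lt_of_le him hmt)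
        exact hblock j i t hit hij (by omega)
      · push_neg at hcase
        exact final j m (by omega) hB1 hcase
end

section
/- If κ is a cardinal with κ < 𝔟 and X_α (α < κ) are sets of reals each having the Hurewicz property Ufin(𝒪,Γ), then ⋃_{α<κ} X_α has the Hurewicz property Ufin(𝒪,Γ). -/
open Set Filter

/-- `𝒰` is a γ-cover of `S`: `𝒰` is infinite and every point of `S` belongs to all but
finitely many members of `𝒰`. -/
def IsGammaCover {α : Type*} (S : Set α) (𝒰 : Set (Set α)) : Prop :=
  𝒰.Infinite ∧ ∀ x ∈ S, {U ∈ 𝒰 | x ∉ U}.Finite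

/-- A set of reals `S` has the Hurewicz property `Ufin(𝒪,Γ)`: for every sequence of
countable open covers of `S`, none containing a finite subcover, there are finite
subfamilies `ℱ n ⊆ 𝒰 n` such that `{⋃ ℱ n : n ∈ ℕ}` is a γ-cover of `S`. -/
def HurewiczSet (S : Set ℝ) : Prop :=
  ∀ 𝒰 : ℕ → Set (Set ℝ),
    (∀ n, (𝒰 n).Countable ∧ (∀ U ∈ 𝒰 n, IsOpen U) ∧ S ⊆ ⋃₀ 𝒰 n ∧
      ¬ ∃ ℱ : Set (Set ℝ), ℱ ⊆ 𝒰 n ∧ ℱ.Finite ∧ S ⊆ ⋃₀ ℱ) →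
    ∃ ℱ : ℕ → Set (Set ℝ), (∀ n, ℱ n ⊆ 𝒰 n ∧ (ℱ n).Finite) ∧
      IsGammaCover S {T | ∃ n, T = ⋃₀ ℱ n}

/-- `f ≤* g`: `f n ≤ g n` for all but finitely many `n`. -/
def EvLE (f g : ℕ → ℕ) : Prop := ∀ᶠ n in Filter.atTop, f n ≤ g n

/-- The unbounding number `𝔟`. -/
noncomputable def frakb : Cardinal :=
  sInf {c : Cardinal | ∃ Y : Set (ℕ → ℕ),
    (¬ ∃ g : ℕ → ℕ, ∀ f ∈ Y, EvLE f g) ∧ c = Cardinal.mk Y}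

/-- Families of size `< 𝔟` are bounded. -/
lemma aux_bound (ι : Type) (hι : Cardinal.mk ι < frakb) (f : ι → ℕ → ℕ) :
    ∃ g : ℕ → ℕ, ∀ i, EvLE (f i) g := by
  by_contra h
  push_neg at h
  have hmem : Cardinal.mk (Set.range f) ∈ {c : Cardinal | ∃ Y : Set (ℕ → ℕ),
      (¬ ∃ g : ℕ → ℕ, ∀ q ∈ Y, EvLE q g) ∧ c = Cardinal.mk Y} := by
    refine ⟨Set.range f, ?_, rfl⟩
    rintro ⟨g, hg⟩
    obtain ⟨i, hi⟩ := h g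
    exact hi (hg (f i) ⟨i, rfl⟩)
  have h1 : frakb ≤ Cardinal.mk (Set.range f) := csInf_le' hmem
  exact absurd (h1.trans Cardinal.mk_range_le) (not_le.mpr hι)

/-- From an infinite range, one can always find a later index with a new value. -/
lemma aux_new (T : ℕ → Set ℝ) (hT : (Set.range T).Infinite) (m : ℕ) :
    ∃ k, m < k ∧ T k ∉ T '' Set.Iic m := by
  by_contra h
  push_neg at h
  have : Set.range T ⊆ T '' Set.Iic m := by
    rintro _ ⟨k, rfl⟩
    rcases le_or_gt k m with hk | hk
    · exact Set.mem_image_of_mem T hk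
    · exact h k hk
  exact hT (((Set.finite_Iic m).image T).subset this)

/-- The key per-summand step: from `HurewiczSet Z` and open covers `u n : ℕ → Set ℝ`,
extract a single function `f` with `x ∈ ⋃_{l ≤ f n} u n l` for all but finitely many `n`,
for every `x ∈ Z`. -/
lemma aux_key (Z : Set ℝ) (hZ : HurewiczSet Z) (u : ℕ → ℕ → Set ℝ)
    (hop : ∀ n m, IsOpen (u n m)) (hcov : ∀ n, ∀ x ∈ Z, ∃ m, x ∈ u n m) :
    ∃ f : ℕ → ℕ, ∀ x ∈ Z, {n | x ∉ ⋃ l ∈ Set.Iic (f n), u n l}.Finite := by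
  classical
  set V : ℕ → ℕ → Set ℝ := fun n m => ⋃ l ∈ Set.Iic m, u n l with hV
  have hVmono : ∀ n, ∀ {m m'}, m ≤ m' → V n m ⊆ V n m' := by
    intro n m m' hm
    exact Set.biUnion_subset_biUnion_left (Set.Iic_subset_Iic.mpr hm)
  have hVcov : ∀ n, ∀ x ∈ Z, ∃ m, x ∈ V n m := by
    intro n x hx
    obtain ⟨m, hm⟩ := hcov n x hx
    exact ⟨m, Set.mem_biUnion (Set.mem_Iic.mpr le_rfl) hm⟩
  by_cases hA : {n | ¬ ∃ m, Z ⊆ V n m}.Finite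
  · -- almost every index admits a "bounded" cover of Z
    refine ⟨fun n => if h : ∃ m, Z ⊆ V n m then h.choose else 0, fun x hx => ?_⟩
    refine hA.subset fun n hn => ?_
    intro hAn
    exact hn (by simp only [dif_pos hAn]; exact hAn.choose_spec hx)
  · set P : ℕ → Prop := fun n => ¬ ∃ m, Z ⊆ V n m with hPdef
    have hPinf : (setOf P).Infinite := hA
    set e : ℕ → ℕ := Nat.nth P with he
    have hPe : ∀ j, P (e j) := fun j => Nat.nth_mem_of_infinite hPinf j
    set Y : ℕ → ℕ → Set ℝ := fun j m => ⋂ l ∈ Set.Iic j, V (e l) m with hY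
    have hYmono : ∀ j, ∀ {m m'}, m ≤ m' → Y j m ⊆ Y j m' := by
      intro j m m' hm
      exact Set.iInter₂_mono fun l _ => hVmono (e l) hm
    have hYsubV : ∀ j m, ∀ l ≤ j, Y j m ⊆ V (e l) m := by
      intro j m l hl
      exact Set.biInter_subset_of_mem (Set.mem_Iic.mpr hl)
    -- apply Hurewicz property of Z to the covers `range (Y j)`
    have hhyp : ∀ j, (Set.range (Y j)).Countable ∧ (∀ U ∈ Set.range (Y j), IsOpen U) ∧
        Z ⊆ ⋃₀ Set.range (Y j) ∧
        ¬ ∃ ℱ : Set (Set ℝ), ℱ ⊆ Set.range (Y j) ∧ ℱ.Finite ∧ Z ⊆ ⋃₀ ℱ := by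
      intro j
      refine ⟨Set.countable_range _, ?_, ?_, ?_⟩
      · rintro _ ⟨m, rfl⟩
        exact (Set.finite_Iic j).isOpen_biInter fun l _ => isOpen_biUnion fun _ _ => hop _ _
      · intro x hx
        choose ml hml using fun l => hVcov (e l) x hx
        refine Set.mem_sUnion.mpr ⟨Y j ((Finset.Iic j).sup ml), ⟨_, rfl⟩, ?_⟩
        refine Set.mem_biInter fun l hl => ?_
        exact hVmono (e l) (Finset.le_sup (Finset.mem_Iic.mpr hl)) (hml l)
      · rintro ⟨ℱ, hsub, hfin, hcover⟩
        set ψ : Set ℝ → ℕ := fun W => if h : ∃ m, W = Y j m then h.choose else 0 with hψ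
        set M := hfin.toFinset.sup ψ with hM
        apply hPe j
        refine ⟨M, fun x hx => ?_⟩
        obtain ⟨W, hW, hxW⟩ := hcover hx
        obtain ⟨m, hm⟩ := hsub hW
        have hWe : W = Y j (ψ W) := by
          have hex : ∃ m, W = Y j m := ⟨m, hm.symm⟩
          simp only [hψ, dif_pos hex]
          exact hex.choose_spec
        have : ψ W ≤ M := Finset.le_sup (hfin.mem_toFinset.mpr hW)
        exact hYsubV j M j le_rfl (hYmono j this (hWe ▸ hxW))
    obtain ⟨𝒢, h𝒢, hGamma⟩ := hZ (fun j => Set.range (Y j)) hhyp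
    set T : ℕ → Set ℝ := fun j => ⋃₀ 𝒢 j with hT
    have hTY : ∀ j, T j ⊆ Y j ((h𝒢 j).2.toFinset.sup
        (fun W => if h : ∃ m, W = Y j m then h.choose else 0)) := by
      intro j x hxT
      obtain ⟨W, hW, hxW⟩ := hxT
      obtain ⟨m, hm⟩ := (h𝒢 j).1 hW
      have hex : ∃ m, W = Y j m := ⟨m, hm.symm⟩
      have hWe : W = Y j (if h : ∃ m, W = Y j m then h.choose else 0) := by
        rw [dif_pos hex]; exact hex.choose_spec
      refine hYmono j (Finset.le_sup ((h𝒢 j).2.mem_toFinset.mpr hW)) ?_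
      rw [dif_pos hex] at hWe ⊢
      exact hWe ▸ hxW
    set h : ℕ → ℕ := fun j => (h𝒢 j).2.toFinset.sup
        (fun W => if h : ∃ m, W = Y j m then h.choose else 0) with hh
    have hCrange : {T' | ∃ n, T' = ⋃₀ 𝒢 n} = Set.range T := by
      ext W; exact ⟨fun ⟨n, hn⟩ => ⟨n, hn.symm⟩, fun ⟨n, hn⟩ => ⟨n, hn.symm⟩⟩
    have hCinf : (Set.range T).Infinite := hCrange ▸ hGamma.1
    -- build a strictly monotone sequence on which T is injective
    set φ : ℕ → ℕ := fun j => Nat.rec 0 (fun _ m => (aux_new T hCinf m).choose) j with hφ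
    have hφs : ∀ j, φ j < φ (j + 1) := fun j => (aux_new T hCinf (φ j)).choose_spec.1
    have hφn : ∀ j, T (φ (j + 1)) ∉ T '' Set.Iic (φ j) :=
      fun j => (aux_new T hCinf (φ j)).choose_spec.2
    have hφmono : StrictMono φ := strictMono_nat_of_lt_succ hφs
    have hinj : Function.Injective (fun j => T (φ j)) := by
      have key : ∀ a b, a < b → T (φ a) ≠ T (φ b) := by
        intro a b hab
        obtain ⟨c, rfl⟩ := Nat.exists_eq_add_of_lt hab
        intro hEq
        refine hφn (a + c) ?_
        rw [← hEq]
        exact Set.mem_image_of_mem T (Set.mem_Iic.mpr (hφmono.monotone (Nat.le_add_right a c)))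
      intro a b hab
      by_contra hne
      rcases Nat.lt_or_ge a b with hlt | hge
      · exact key a b hlt hab
      · exact key b a (lt_of_le_of_ne hge (Ne.symm hne)) hab.symm
    refine ⟨fun n => if hn : ∃ m, Z ⊆ V n m then hn.choose else h (φ (Nat.count P n)),
      fun x hx => ?_⟩
    have hbadJ : {j | x ∉ T (φ j)}.Finite := by
      have hb : {j | x ∉ T (φ j)} ⊆ (fun j => T (φ j)) ⁻¹' {U ∈ Set.range T | x ∉ U} := by
        intro j hj
        exact ⟨⟨φ j, rfl⟩, hj⟩
      refine Set.Finite.subset (Set.Finite.preimage hinj.injOn ?_) hb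
      exact hCrange ▸ hGamma.2 x hx
    refine (hbadJ.image e).subset fun n hn => ?_
    simp only [Set.mem_setOf_eq] at hn
    by_cases hAn : ∃ m, Z ⊆ V n m
    · exfalso
      apply hn
      rw [dif_pos hAn]
      exact hAn.choose_spec hx
    · rw [dif_neg hAn] at hn
      have hPn : P n := hAn
      have hen : e (Nat.count P n) = n := Nat.nth_count hPn
      refine ⟨Nat.count P n, ?_, hen⟩
      intro hxT
      apply hn
      have h1 : x ∈ Y (φ (Nat.count P n)) (h (φ (Nat.count P n))) := hTY _ hxT
      have h2 := hYsubV (φ (Nat.count P n)) (h (φ (Nat.count P n)))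
        (Nat.count P n) hφmono.le_apply h1
      rwa [hen] at h2

/-- A union of fewer than `𝔟` many sets of reals with the Hurewicz property has the
Hurewicz property. -/
theorem stmt6 (ι : Type) (hι : Cardinal.mk ι < frakb)
    (X : ι → Set ℝ) (hX : ∀ i, HurewiczSet (X i)) :
    HurewiczSet (⋃ i, X i) := by
  classical
  intro 𝒰 h𝒰
  set S : Set ℝ := ⋃ i, X i with hS
  -- every 𝒰 n is infinite (else it were a finite subcover)
  have hinf : ∀ n, (𝒰 n).Infinite := by
    intro n
    by_contra hfin
    rw [Set.not_infinite] at hfin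
    exact (h𝒰 n).2.2.2 ⟨𝒰 n, Set.Subset.rfl, hfin, (h𝒰 n).2.2.1⟩
  have henum : ∀ n, ∃ u : ℕ → Set ℝ, 𝒰 n = Set.range u :=
    fun n => (h𝒰 n).1.exists_eq_range (hinf n).nonempty
  choose u hu using henum
  set V : ℕ → ℕ → Set ℝ := fun n m => ⋃ l ∈ Set.Iic m, u n l with hV
  have hVmono : ∀ n, ∀ {m m'}, m ≤ m' → V n m ⊆ V n m' := by
    intro n m m' hm
    exact Set.biUnion_subset_biUnion_left (Set.Iic_subset_Iic.mpr hm)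
  have hop : ∀ n m, IsOpen (u n m) := by
    intro n m
    exact (h𝒰 n).2.1 (u n m) (hu n ▸ Set.mem_range_self m)
  have hucov : ∀ n, ∀ x ∈ S, ∃ m, x ∈ u n m := by
    intro n x hx
    have := (h𝒰 n).2.2.1 hx
    rw [hu n] at this
    obtain ⟨W, ⟨m, rfl⟩, hxW⟩ := this
    exact ⟨m, hxW⟩
  -- for each i, the key function
  have hkey : ∀ i, ∃ f : ℕ → ℕ, ∀ x ∈ X i,
      {n | x ∉ ⋃ l ∈ Set.Iic (f n), u n l}.Finite :=
    fun i => aux_key (X i) (hX i) u hop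
      (fun n x hx => hucov n x (Set.mem_iUnion.mpr ⟨i, hx⟩))
  choose f hf using hkey
  obtain ⟨g, hg⟩ := aux_bound ι hι f
  refine ⟨fun n => u n '' Set.Iic (g n), fun n => ⟨?_, (Set.finite_Iic _).image _⟩, ?_, ?_⟩
  · rw [hu n]; exact Set.image_subset_range _ _
  · -- infinitude of the resulting cover
    by_contra hfin
    rw [Set.not_infinite] at hfin
    have hsU : ∀ n, ⋃₀ (u n '' Set.Iic (g n)) = V n (g n) := fun n => Set.sUnion_image _ _
    have hfin' : {T | ∃ n, T = ⋃₀ (u n '' Set.Iic (g n))}.Finite := hfin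
    have hmemC : ∀ n, V n (g n) ∈ {T | ∃ n, T = ⋃₀ (u n '' Set.Iic (g n))} :=
      fun n => ⟨n, (hsU n).symm⟩
    haveI := hfin'.to_subtype
    obtain ⟨⟨T, hTC⟩, hfib⟩ := Finite.exists_infinite_fiber
      (fun n => (⟨V n (g n), hmemC n⟩ : {T | ∃ n, T = ⋃₀ (u n '' Set.Iic (g n))}))
    rw [Set.infinite_coe_iff] at hfib
    obtain ⟨N, hN⟩ := hTC
    have hnc : ¬ S ⊆ ⋃₀ (u N '' Set.Iic (g N)) := by
      intro hcon
      exact (h𝒰 N).2.2.2 ⟨u N '' Set.Iic (g N),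
        by rw [hu N]; exact Set.image_subset_range _ _, (Set.finite_Iic _).image _, hcon⟩
    obtain ⟨s, hsS, hsT⟩ := Set.not_subset.mp hnc
    rw [hsU N] at hsT
    obtain ⟨i, hsi⟩ := Set.mem_iUnion.mp hsS
    have hbad : {n | s ∉ V n (f i n)}.Finite := hf i s hsi
    have hgle : {n | ¬ f i n ≤ g n}.Finite := by
      have := hg i
      rw [EvLE, ← Nat.cofinite_eq_atTop, eventually_cofinite] at this
      exact this
    obtain ⟨n, hn1, hn2⟩ := (hfib.diff (hbad.union hgle)).nonempty
    simp only [Set.mem_union, Set.mem_setOf_eq, not_or, not_not] at hn2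
    have hsW : s ∈ V n (g n) := hVmono n hn2.2 hn2.1
    have hWT : V n (g n) = T := congrArg Subtype.val hn1
    have hsT2 : s ∈ T := hWT ▸ hsW
    rw [hN.trans (hsU N)] at hsT2
    exact hsT hsT2
  · -- the finiteness condition of the γ-cover
    intro x hx
    obtain ⟨i, hxi⟩ := Set.mem_iUnion.mp hx
    have hbad : {n | x ∉ V n (f i n)}.Finite := hf i x hxi
    have hgle : {n | ¬ f i n ≤ g n}.Finite := by
      have := hg i
      rw [EvLE, ← Nat.cofinite_eq_atTop, eventually_cofinite] at this
      exact this
    refine ((hbad.union hgle).image (fun n => ⋃₀ (u n '' Set.Iic (g n)))).subset ?_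
    rintro T ⟨⟨n, rfl⟩, hxT⟩
    refine ⟨n, ?_, rfl⟩
    by_contra hcon
    simp only [Set.mem_union, Set.mem_setOf_eq, not_or, not_not] at hcon
    refine hxT ?_
    rw [Set.sUnion_image]
    exact hVmono n hcon.2 hcon.1
end

section
/- If κ is a cardinal with κ < 𝔥 and X_α (α < κ) are sets of reals each satisfying S1(Γ,Γ), then ⋃_{α<κ} X_α satisfies S1(Γ,Γ). -/
open Set Filter

/-- A set of reals `S` satisfies `S1(Γ,Γ)`. -/
def S1GammaGamma (S : Set ℝ) : Prop :=
  ∀ 𝒰 : ℕ → Set (Set ℝ),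
    (∀ n, (𝒰 n).Countable ∧ (∀ V ∈ 𝒰 n, IsOpen V) ∧ IsGammaCover S (𝒰 n)) →
    ∃ V : ℕ → Set ℝ, (∀ n, V n ∈ 𝒰 n) ∧ IsGammaCover S (Set.range V)

/-- `D ⊆ [ℕ]^∞` is an open dense family with respect to `⊆*`. -/
def OpenDenseFam (D : Set (Set ℕ)) : Prop :=
  (∀ a ∈ D, a.Infinite) ∧
  (∀ a ∈ D, ∀ b : Set ℕ, b.Infinite → (b \ a).Finite → b ∈ D) ∧
  (∀ a : Set ℕ, a.Infinite → ∃ d ∈ D, (d \ a).Finite)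

/-- The density number `𝔥`: the least cardinality of a collection of open dense families
in `[ℕ]^∞` whose intersection is empty. -/
noncomputable def frakh : Cardinal :=
  sInf {c : Cardinal | ∃ 𝒟 : Set (Set (Set ℕ)),
    (∀ D ∈ 𝒟, OpenDenseFam D) ∧ ⋂₀ 𝒟 = ∅ ∧ c = Cardinal.mk 𝒟}

lemma greedy_choice {α : Type*} (C : ℕ → Set α) (hC : ∀ n, (C n).Infinite) :
    ∃ f : ℕ → α, (∀ n, f n ∈ C n) ∧ Function.Injective f := by
  classical
  have hex : ∀ (n : ℕ) (L : List α), ∃ w, w ∈ C n ∧ ¬ w ∈ L := by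
    intro n L
    obtain ⟨w, hw1, hw2⟩ := ((hC n).diff L.finite_toSet).nonempty
    exact ⟨w, hw1, hw2⟩
  let pick : ℕ → List α → α := fun n L => (hex n L).choose
  let Lst : ℕ → List α := fun n => Nat.rec [] (fun m L => L ++ [pick m L]) n
  have hLst_succ : ∀ n, Lst (n + 1) = Lst n ++ [pick n (Lst n)] := fun n => rfl
  refine ⟨fun n => pick n (Lst n), fun n => (hex n (Lst n)).choose_spec.1, ?_⟩
  have hmem : ∀ m n, m < n → pick m (Lst m) ∈ Lst n := by
    intro m n h
    induction n with
    | zero => omega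
    | succ k ih =>
      rw [hLst_succ]
      rcases Nat.lt_succ_iff_lt_or_eq.mp h with h' | h'
      · exact List.mem_append_left _ (ih h')
      · subst h'
        exact List.mem_append_right _ (List.mem_singleton.mpr rfl)
  intro m n hmn
  simp only at hmn
  by_contra hne
  rcases Nat.lt_or_gt_of_ne hne with h | h
  · exact (hex n (Lst n)).choose_spec.2 (show pick n (Lst n) ∈ Lst n from hmn ▸ hmem m n h)
  · exact (hex m (Lst m)).choose_spec.2 (show pick m (Lst m) ∈ Lst m from hmn ▸ hmem n m h)

lemma density_lemma (S₀ : Set ℝ) (hS1 : S1GammaGamma S₀) (U : ℕ → ℕ → Set ℝ)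
    (hinj : ∀ n, Function.Injective (U n)) (hopen : ∀ n j, IsOpen (U n j))
    (hB : ∀ (n : ℕ), ∀ x ∈ S₀, {j | x ∉ U n j}.Finite)
    (c : Set ℕ) (hc : c.Infinite) :
    ∃ a : Set ℕ, a ⊆ c ∧ a.Infinite ∧
      ∀ x ∈ S₀, ∃ M, ∀ j ∈ a, ∀ j' ∈ a, M ≤ j → j < j' →
        x ∈ ⋂ n ∈ Set.Iic j, U n j' := by
  classical
  set A : ℕ → ℕ → Set ℝ := fun k j => ⋂ n ∈ Set.Iic k, U n j with hA
  have hmemA : ∀ (x : ℝ) (k j : ℕ), x ∈ A k j ↔ ∀ n ≤ k, x ∈ U n j := by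
    intro x k j
    simp [hA, Set.mem_iInter₂, Set.mem_Iic]
  have hAopen : ∀ k j, IsOpen (A k j) :=
    fun k j => Set.Finite.isOpen_biInter (Set.finite_Iic k) (fun n _ => hopen n j)
  have hAanti : ∀ {k k' : ℕ}, k ≤ k' → ∀ j, A k' j ⊆ A k j := by
    intro k k' hkk j x hx
    rw [hmemA] at hx ⊢
    exact fun n hn => hx n (hn.trans hkk)
  have hAbad : ∀ (k : ℕ), ∀ x ∈ S₀, {j | x ∉ A k j}.Finite := by
    intro k x hx
    have h1 : {j | x ∉ A k j} ⊆ ⋃ n ∈ Set.Iic k, {j | x ∉ U n j} := by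
      intro j hj
      simp only [Set.mem_setOf_eq, hmemA] at hj
      push_neg at hj
      obtain ⟨n, hn1, hn2⟩ := hj
      exact Set.mem_biUnion hn1 hn2
    exact Set.Finite.subset ((Set.finite_Iic k).biUnion (fun n _ => hB n x hx)) h1
  -- the auxiliary covers
  set J : ℕ → Set ℕ := fun k => {j | j ∈ c ∧ k < j} with hJ
  have hJinf : ∀ k, (J k).Infinite := by
    intro k
    have : c \ Set.Iic k = J k := by
      ext j
      simp only [Set.mem_diff, Set.mem_Iic, not_le, hJ, Set.mem_setOf_eq]
    exact this ▸ (hc.diff (Set.finite_Iic k))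
  set Y : ℕ → Set (Set ℝ) := fun k => (fun j => A k j) '' (J k) with hY
  -- key step: a "good" column function
  have hgood : ∃ good : ℕ → ℕ, (∀ k, k < good k ∧ good k ∈ c) ∧
      ∀ x ∈ S₀, ∃ K, ∀ k, K ≤ k → x ∈ A k (good k) := by
    by_cases hT : {k | (Y k).Infinite}.Infinite
    · -- Case A : apply the selection principle
      have hφex : ∀ s : ℕ, ∃ k, s ≤ k ∧ (Y k).Infinite := by
        intro s
        obtain ⟨k, hk1, hk2⟩ := (hT.diff (Set.finite_Iio s)).nonempty
        exact ⟨k, not_lt.mp (fun h => hk2 h), hk1⟩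
      choose φ hφ1 hφ2 using hφex
      have hcov : ∀ s, (Y (φ s)).Countable ∧ (∀ V ∈ Y (φ s), IsOpen V) ∧
          IsGammaCover S₀ (Y (φ s)) := by
        intro s
        refine ⟨(Set.to_countable _).image _, ?_, hφ2 s, ?_⟩
        · rintro V ⟨j, -, rfl⟩
          exact hAopen _ j
        · intro x hx
          have hsub : {V ∈ Y (φ s) | x ∉ V} ⊆ (fun j => A (φ s) j) '' {j | x ∉ A (φ s) j} := by
            rintro V ⟨⟨j, hjJ, rfl⟩, hxV⟩
            exact ⟨j, hxV, rfl⟩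
          exact Set.Finite.subset ((hAbad (φ s) x hx).image _) hsub
      obtain ⟨Z, hZmem, hZinf, hZgam⟩ := hS1 _ hcov
      have hCinf : ∀ k, (Z '' Set.Ici k).Infinite := by
        intro k
        have hsub : Set.range Z \ (Z '' Set.Iio k) ⊆ Z '' Set.Ici k := by
          rintro W ⟨⟨s, rfl⟩, hW⟩
          rcases Nat.lt_or_ge s k with h | h
          · exact absurd ⟨s, h, rfl⟩ hW
          · exact ⟨s, h, rfl⟩
        exact (hZinf.diff ((Set.finite_Iio k).image Z)).mono hsub
      obtain ⟨f, hfC, hfinj⟩ := greedy_choice _ hCinf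
      have hsk : ∀ k, ∃ s, k ≤ s ∧ Z s = f k := by
        intro k
        obtain ⟨s, hs1, hs2⟩ := hfC k
        exact ⟨s, hs1, hs2⟩
      choose s hs1 hs2 using hsk
      have hw : ∀ k, ∃ j, j ∈ c ∧ φ (s k) < j ∧ A (φ (s k)) j = f k := by
        intro k
        have h1 : Z (s k) ∈ Y (φ (s k)) := hZmem (s k)
        rw [hs2 k] at h1
        obtain ⟨j, hjJ, hje⟩ := h1
        exact ⟨j, hjJ.1, hjJ.2, hje⟩
      choose g hg1 hg2 hg3 using hw
      refine ⟨g, fun k => ⟨?_, hg1 k⟩, ?_⟩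
      · exact lt_of_le_of_lt (le_trans (hs1 k) (hφ1 (s k))) (hg2 k)
      · intro x hx
        have hBadfin : {W ∈ Set.range Z | x ∉ W}.Finite := hZgam x hx
        have hpre : (f ⁻¹' {W ∈ Set.range Z | x ∉ W}).Finite :=
          hBadfin.preimage hfinj.injOn
        obtain ⟨K0, hK0⟩ := hpre.bddAbove
        refine ⟨K0 + 1, fun k hk => ?_⟩
        have hfk : f k ∉ {W ∈ Set.range Z | x ∉ W} := by
          intro hmem
          exact absurd (hK0 hmem) (by omega)
        have hfrange : f k ∈ Set.range Z := ⟨s k, hs2 k⟩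
        have hxfk : x ∈ f k := by
          by_contra hxn
          exact hfk ⟨hfrange, hxn⟩
        rw [← hg3 k] at hxfk
        exact hAanti (le_trans (hs1 k) (hφ1 (s k))) _ hxfk
    · -- Case B : almost all Y k are finite
      rw [Set.not_infinite] at hT
      obtain ⟨k₀, hk₀⟩ := hT.bddAbove
      have hYfin : ∀ k, k₀ < k → (Y k).Finite := by
        intro k hk
        rw [← Set.not_infinite]
        intro h
        exact absurd (hk₀ h) (by omega)
      -- for every k > k₀ there is a uniformly good column
      have hw : ∀ k, k₀ < k → ∃ j, j ∈ c ∧ k < j ∧ S₀ ⊆ A k j := by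
        intro k hk
        have hfib : ∃ W ∈ Y k, {j | j ∈ J k ∧ A k j = W}.Infinite := by
          by_contra h
          push_neg at h
          have hJsub : J k ⊆ ⋃ W ∈ Y k, {j | j ∈ J k ∧ A k j = W} := by
            intro j hj
            exact Set.mem_biUnion ⟨j, hj, rfl⟩ ⟨hj, rfl⟩
          exact (hJinf k) (Set.Finite.subset ((hYfin k hk).biUnion h) hJsub)
        obtain ⟨W, hWY, hWfib⟩ := hfib
        have hSW : S₀ ⊆ W := by
          intro x hx
          obtain ⟨j, ⟨hjJ, hje⟩, hjg⟩ := (hWfib.diff (hAbad k x hx)).nonempty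
          simp only [Set.mem_setOf_eq, not_not] at hjg
          exact hje ▸ hjg
        obtain ⟨j, ⟨hjc, hjk⟩, hje⟩ := hWfib.nonempty
        exact ⟨j, hjc, hjk, hje ▸ hSW⟩
      have hw' : ∀ k, ∃ j, j ∈ c ∧ max k (k₀ + 1) < j ∧ S₀ ⊆ A (max k (k₀ + 1)) j :=
        fun k => hw _ (lt_of_lt_of_le (Nat.lt_succ_self k₀) (le_max_right _ _))
      choose g hg1 hg2 hg3 using hw'
      refine ⟨g, fun k => ⟨lt_of_le_of_lt (le_max_left _ _) (hg2 k), hg1 k⟩, ?_⟩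
      intro x hx
      exact ⟨0, fun k _ => hAanti (le_max_left _ _) _ (hg3 k hx)⟩
  -- build `a` from the good column function by iteration
  obtain ⟨good, hgp, hev⟩ := hgood
  obtain ⟨base, hbase⟩ := hc.nonempty
  set m : ℕ → ℕ := fun t => Nat.rec base (fun _ prev => good prev) t with hm
  have hm_succ : ∀ t, m (t + 1) = good (m t) := fun t => rfl
  have hm_mono : StrictMono m :=
    strictMono_nat_of_lt_succ (fun t => (hgp (m t)).1)
  have hm_le : ∀ t, t ≤ m t := fun t => hm_mono.le_apply
  refine ⟨Set.range m, ?_, Set.infinite_range_of_injective hm_mono.injective, ?_⟩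
  · rintro _ ⟨t, rfl⟩
    cases t with
    | zero => exact hbase
    | succ u => exact (hgp (m u)).2
  · intro x hx
    obtain ⟨K, hK⟩ := hev x hx
    refine ⟨m K, ?_⟩
    rintro _ ⟨t, rfl⟩ _ ⟨t', rfl⟩ hMj hjj'
    have htt' : t < t' := hm_mono.lt_iff_lt.mp hjj'
    obtain ⟨u, rfl⟩ : ∃ u, t' = u + 1 := ⟨t' - 1, by omega⟩
    have h1 : K ≤ m u := by
      have h2 : m K ≤ m t := hMj
      have h3 : m t ≤ m u := hm_mono.monotone (by omega)
      have := hm_le K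
      omega
    have h4 : x ∈ A (m u) (good (m u)) := hK (m u) h1
    rw [← hm_succ u] at h4
    exact hAanti (hm_mono.monotone (by omega : t ≤ u)) _ h4

/-- A union of fewer than `𝔥` many sets of reals satisfying `S1(Γ,Γ)` satisfies
`S1(Γ,Γ)`. -/
theorem stmt8 (ι : Type) (hι : Cardinal.mk ι < frakh)
    (X : ι → Set ℝ) (hX : ∀ i, S1GammaGamma (X i)) :
    S1GammaGamma (⋃ i, X i) := by
  classical
  intro 𝒰 h𝒰
  have hcnt : ∀ n, (𝒰 n).Countable := fun n => (h𝒰 n).1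
  have hopn : ∀ n, ∀ V ∈ 𝒰 n, IsOpen V := fun n => (h𝒰 n).2.1
  have hγ : ∀ n, IsGammaCover (⋃ i, X i) (𝒰 n) := fun n => (h𝒰 n).2.2
  have hinf : ∀ n, (𝒰 n).Infinite := fun n => (hγ n).1
  -- injective enumerations of the covers
  have henum : ∀ n, ∃ U : ℕ → Set ℝ, Function.Injective U ∧ Set.range U = 𝒰 n := by
    intro n
    haveI := (hcnt n).to_subtype
    haveI := (hinf n).to_subtype
    obtain ⟨d⟩ := nonempty_denumerable ↥(𝒰 n)
    refine ⟨fun k => ((Denumerable.eqv ↥(𝒰 n)).symm k : Set ℝ), ?_, ?_⟩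
    · exact Subtype.coe_injective.comp (Denumerable.eqv ↥(𝒰 n)).symm.injective
    · rw [show (fun k => ((Denumerable.eqv ↥(𝒰 n)).symm k : Set ℝ))
          = Subtype.val ∘ (Denumerable.eqv ↥(𝒰 n)).symm from rfl,
        Set.range_comp, Equiv.range_eq_univ, Set.image_univ, Subtype.range_coe]
  choose U hUinj hUrange using henum
  have hUmem : ∀ n j, U n j ∈ 𝒰 n := by
    intro n j
    rw [← hUrange n]
    exact ⟨j, rfl⟩
  have hUopen : ∀ n j, IsOpen (U n j) := fun n j => hopn n _ (hUmem n j)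
  have hB : ∀ (n : ℕ), ∀ x ∈ (⋃ i, X i), {j | x ∉ U n j}.Finite := by
    intro n x hx
    have he : {j | x ∉ U n j} = U n ⁻¹' {V ∈ 𝒰 n | x ∉ V} := by
      ext j
      simp only [Set.mem_setOf_eq, Set.mem_preimage]
      exact ⟨fun h => ⟨hUmem n j, h⟩, fun h => h.2⟩
    rw [he]
    exact ((hγ n).2 x hx).preimage (hUinj n).injOn
  -- the open dense families
  set D : ι → Set (Set ℕ) := fun i =>
    {a | a.Infinite ∧ ∀ x ∈ X i, ∃ M, ∀ j ∈ a, ∀ j' ∈ a, M ≤ j → j < j' →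
      x ∈ ⋂ n ∈ Set.Iic j, U n j'} with hD
  have hOD : ∀ i, OpenDenseFam (D i) := by
    intro i
    refine ⟨fun a ha => ha.1, ?_, ?_⟩
    · -- openness
      rintro a ⟨hainf, haP⟩ b hbinf hba
      refine ⟨hbinf, ?_⟩
      intro x hx
      obtain ⟨M, hM⟩ := haP x hx
      obtain ⟨m0, hm0⟩ := hba.bddAbove
      refine ⟨max M (m0 + 1), ?_⟩
      intro j hj j' hj' hMj hjj'
      have hja : j ∈ a := by
        by_contra h
        have h1 : j ≤ m0 := hm0 ⟨hj, h⟩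
        have h2 : m0 + 1 ≤ j := le_trans (le_max_right _ _) hMj
        omega
      have hj'a : j' ∈ a := by
        by_contra h
        have h1 : j' ≤ m0 := hm0 ⟨hj', h⟩
        have h2 : m0 + 1 ≤ j := le_trans (le_max_right _ _) hMj
        omega
      exact hM j hja j' hj'a (le_trans (le_max_left _ _) hMj) hjj'
    · -- density
      intro c hc
      obtain ⟨a, hac, hainf, haP⟩ := density_lemma (X i) (hX i) U hUinj hUopen
        (fun n x hx => hB n x (Set.mem_iUnion_of_mem i hx)) c hc
      refine ⟨a, ⟨hainf, haP⟩, ?_⟩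
      rw [Set.diff_eq_empty.mpr hac]
      exact Set.finite_empty
  -- get a single set in the intersection of all the families
  have hsel : ∃ a : Set ℕ, a.Infinite ∧ ∀ i, a ∈ D i := by
    rcases isEmpty_or_nonempty ι with hE | hNE
    · exact ⟨Set.univ, Set.infinite_univ, fun i => isEmptyElim i⟩
    · have hne : (⋂₀ Set.range D).Nonempty := by
        rw [Set.nonempty_iff_ne_empty]
        intro hempty
        have hmem : Cardinal.mk ↥(Set.range D) ∈ {c : Cardinal | ∃ 𝒟 : Set (Set (Set ℕ)),
            (∀ D' ∈ 𝒟, OpenDenseFam D') ∧ ⋂₀ 𝒟 = ∅ ∧ c = Cardinal.mk 𝒟} := by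
          refine ⟨Set.range D, ?_, hempty, rfl⟩
          rintro D' ⟨i, rfl⟩
          exact hOD i
        have h1 : frakh ≤ Cardinal.mk ↥(Set.range D) :=
          csInf_le (OrderBot.bddBelow _) hmem
        have h2 : Cardinal.mk ↥(Set.range D) ≤ Cardinal.mk ι := Cardinal.mk_range_le
        exact absurd hι (not_lt.mpr (h1.trans h2))
      obtain ⟨a, ha⟩ := hne
      have haD : ∀ i, a ∈ D i := fun i => ha (D i) ⟨i, rfl⟩
      exact ⟨a, (haD hNE.some).1, haD⟩
  obtain ⟨a, hainf, haD⟩ := hsel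
  -- final greedy selection
  set C : ℕ → Set (Set ℝ) := fun n =>
    {W | ∃ j ∈ a, ∃ j' ∈ a, n ≤ j ∧ j < j' ∧ W = U n j'} with hC
  have hCinf : ∀ n, (C n).Infinite := by
    intro n
    obtain ⟨j₀, hj₀a, hj₀n⟩ : ∃ j₀ ∈ a, n ≤ j₀ := by
      obtain ⟨j₀, hj1, hj2⟩ := (hainf.diff (Set.finite_Iio n)).nonempty
      exact ⟨j₀, hj1, not_lt.mp hj2⟩
    have hBig : (a \ Set.Iic j₀).Infinite := hainf.diff (Set.finite_Iic j₀)
    have hsub : U n '' (a \ Set.Iic j₀) ⊆ C n := by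
      rintro _ ⟨j', ⟨hj'a, hj'g⟩, rfl⟩
      exact ⟨j₀, hj₀a, j', hj'a, hj₀n, not_le.mp hj'g, rfl⟩
    exact (hBig.image (hUinj n).injOn).mono hsub
  obtain ⟨V, hVC, hVinj⟩ := greedy_choice C hCinf
  refine ⟨V, ?_, Set.infinite_range_of_injective hVinj, ?_⟩
  · intro n
    obtain ⟨j, -, j', -, -, -, he⟩ := hVC n
    rw [he, ← hUrange n]
    exact ⟨j', rfl⟩
  · intro x hx
    obtain ⟨i, hxi⟩ := Set.mem_iUnion.mp hx
    obtain ⟨M, hM⟩ := (haD i).2 x hxi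
    have hsub : {W ∈ Set.range V | x ∉ W} ⊆ V '' Set.Iio M := by
      rintro _ ⟨⟨n, rfl⟩, hxV⟩
      refine ⟨n, ?_, rfl⟩
      by_contra h
      have hMn : M ≤ n := not_lt.mp h
      obtain ⟨j, hja, j', hj'a, hnj, hjj', he⟩ := hVC n
      have hxA : x ∈ ⋂ k ∈ Set.Iic j, U k j' :=
        hM j hja j' hj'a (le_trans hMn hnj) hjj'
      have : x ∈ U n j' := by
        have := Set.mem_iInter₂.mp hxA n (Set.mem_Iic.mpr hnj)
        exact this
      rw [← he] at this
      exact hxV this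
    exact Set.Finite.subset ((Set.finite_Iio M).image V) hsub
end

section
/- Assume cov(ℳ) = 𝔠, i.e., the least cardinality of a family of meager subsets of ℤ^ℕ covering ℤ^ℕ equals the cardinality of the continuum 𝔠 = 2^{ℵ₀}. Then there exist 𝔠-Luzin subsets L₀ and L₁ of ℤ^ℕ, each satisfying S1(Ω,Ω), such that L₀ + L₁ = ℤ^ℕ. -/
open Set Filter Pointwise

/-- `𝒰` is an ω-cover of `S`: `S ∉ 𝒰` and every finite subset of `S` is contained in
some member of `𝒰`. -/
def IsOmegaCover {α : Type*} (S : Set α) (𝒰 : Set (Set α)) : Prop :=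
  S ∉ 𝒰 ∧ ∀ F : Set α, F ⊆ S → F.Finite → ∃ U ∈ 𝒰, F ⊆ U

/-- `S` satisfies `S1(Ω,Ω)`: for every sequence of countable open ω-covers of `S` one can
pick one member from each so that the chosen sets form an ω-cover of `S`. -/
def S1OmegaOmega {α : Type*} [TopologicalSpace α] (S : Set α) : Prop :=
  ∀ 𝒰 : ℕ → Set (Set α),
    (∀ n, (𝒰 n).Countable ∧ (∀ U ∈ 𝒰 n, IsOpen U) ∧ IsOmegaCover S (𝒰 n)) →
    ∃ U : ℕ → Set α, (∀ n, U n ∈ 𝒰 n) ∧ IsOmegaCover S (Set.range U)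

/-- `L ⊆ ℤ^ℕ` is `𝔠`-Luzin: `|L| ≥ 𝔠` and `|L ∩ M| < 𝔠` for every meager `M`. -/
def IsLuzinZN (L : Set (ℕ → ℤ)) : Prop :=
  Cardinal.continuum ≤ Cardinal.mk L ∧
    ∀ M : Set (ℕ → ℤ), IsMeagre M → Cardinal.mk ↥(L ∩ M) < Cardinal.continuum

/-!
A transfinite construction of length `𝔠`. Enumerate, with each item occurring at some stage,
all sequences of countable families of open sets, all `Gδ` sets and all points of `ℤ^ℕ`.
At stage `β`, on each side `i`, first pick one set `V k` from the `k`-th enumerated family so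
that every finite set `F` of points chosen so far is *captured*: for any finitely many basic
open sets, some `V k` contains `F` and meets all of them. Then pick two points with sum the
enumerated point, each generic over the fewer than `𝔠` comeagre sets met so far: the enumerated
dense `Gδ` sets, the complements of earlier points, and the dense open sets `captureSet` of the
selections made up to now. Since fewer than `𝔠` meagre sets do not cover `ℤ^ℕ`, both choices are
possible (for the selection, a point of `ℤ^ℕ` codes the indices). Genericity over `Gδ` sets makes
each side Luzin, and genericity over `captureSet` lets capturing propagate to all finite subsets
of the final set, which then yields `S1(Ω,Ω)`.
-/

open Topology TopologicalSpace Cardinal Function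

universe u

noncomputable def covMeagre (X : Type u) [TopologicalSpace X] : Cardinal.{u} :=
  sInf {c : Cardinal |
    ∃ 𝒜 : Set (Set X), (∀ A ∈ 𝒜, IsMeagre A) ∧ ⋃₀ 𝒜 = Set.univ ∧ c = #𝒜}

section Cardinal

variable {α β : Type u}

theorem mk_lt_continuum_of_countable [Countable α] : #α < 𝔠 :=
  mk_le_aleph0.trans_lt aleph0_lt_continuum

theorem mk_prod_le_continuum (ha : #α ≤ 𝔠) (hb : #β ≤ 𝔠) : #(α × β) ≤ 𝔠 := by
  simpa [mul_eq_self aleph0_le_continuum] using mul_le_mul' ha hb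

theorem mk_prod_lt_continuum (ha : #α < 𝔠) (hb : #β < 𝔠) : #(α × β) < 𝔠 := by
  simpa using mul_lt_of_lt aleph0_le_continuum ha hb

theorem mk_union_lt_continuum {s t : Set α} (hs : #s < 𝔠) (ht : #t < 𝔠) :
    #(s ∪ t : Set α) < 𝔠 :=
  (mk_union_le s t).trans_lt (add_lt_of_lt aleph0_le_continuum hs ht)

theorem mk_nat_fun_le_continuum (h : #α ≤ 𝔠) : #(ℕ → α) ≤ 𝔠 := by
  rw [mk_arrow, mk_nat, lift_aleph0, lift_uzero, ← continuum_power_aleph0]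
  exact power_le_power_right h

theorem mk_finset_subset_lt_continuum {S : Set α} (hS : #S < 𝔠) :
    #{F : Finset α // ↑F ⊆ S} < 𝔠 := by
  classical
  have hinj : Injective fun F : {F : Finset α // ↑F ⊆ S} => F.1.subtype (· ∈ S) := by
    intro F G h
    have := congrArg (Finset.map (Embedding.subtype (· ∈ S))) h
    rwa [Finset.subtype_map_of_mem fun x hx => F.2 hx,
      Finset.subtype_map_of_mem fun x hx => G.2 hx, ← Subtype.ext_iff] at this
  calc #{F : Finset α // ↑F ⊆ S} ≤ #(Finset S) := mk_le_of_injective hinj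
    _ ≤ #(List S) := mk_le_of_surjective List.toFinset_surjective
    _ ≤ max ℵ₀ #S := mk_list_le_max _
    _ < 𝔠 := max_lt aleph0_lt_continuum hS

theorem mk_opens_le_continuum (X : Type u) [TopologicalSpace X] [SecondCountableTopology X] :
    #(Opens X) ≤ 𝔠 := by
  have hinj : Injective fun U : Opens X => {b : countableBasis X | (b : Set X) ⊆ U} := by
    intro U V h
    have key : ∀ s ∈ countableBasis X, s ⊆ U ↔ s ⊆ V := fun s hs =>
      Set.ext_iff.1 h ⟨s, hs⟩
    ext1
    rw [(isBasis_countableBasis X).open_eq_sUnion' U.isOpen,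
      (isBasis_countableBasis X).open_eq_sUnion' V.isOpen]
    congr 1
    ext s
    exact and_congr_right (key s)
  calc #(Opens X) ≤ #(Set (countableBasis X)) := mk_le_of_injective hinj
    _ = 2 ^ #(countableBasis X) := mk_set
    _ ≤ 2 ^ ℵ₀ := power_le_power_left two_ne_zero (countable_countableBasis X).le_aleph0
    _ = 𝔠 := two_power_aleph0

end Cardinal

section Meagre

variable {X : Type u} [TopologicalSpace X]

theorem exists_forall_mem_of_mk_lt_covMeagre {𝒜 : Set (Set X)} (h𝒜 : #𝒜 < covMeagre X) :
    ∃ z, ∀ A ∈ 𝒜, A ∈ residual X → z ∈ A := by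
  by_contra! h
  have hcover : covMeagre X ≤ #(compl '' {A ∈ 𝒜 | A ∈ residual X}) := by
    refine csInf_le' ⟨_, ?_, eq_univ_of_forall fun z => ?_, rfl⟩
    · rintro _ ⟨A, ⟨-, hA⟩, rfl⟩
      simpa [IsMeagre] using hA
    · obtain ⟨A, hA𝒜, hA, hzA⟩ := h z
      exact ⟨Aᶜ, ⟨A, ⟨hA𝒜, hA⟩, rfl⟩, hzA⟩
  exact lt_irrefl _
    ((hcover.trans (mk_image_le.trans (mk_le_mk_of_subset (sep_subset _ _)))).trans_lt h𝒜)

theorem Homeomorph.preimage_mem_residual {Y : Type*} [TopologicalSpace Y] (e : X ≃ₜ Y)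
    {A : Set Y} (hA : A ∈ residual Y) : e ⁻¹' A ∈ residual X := by
  have : IsMeagre (e ⁻¹' Aᶜ) :=
    IsMeagre.preimage_of_isOpenMap e.continuous e.isOpenMap (by simpa [IsMeagre] using hA)
  simpa [IsMeagre] using this

theorem exists_add_eq_forall_mem [AddCommGroup X] [IsTopologicalAddGroup X]
    (hcov : covMeagre X = 𝔠) (x : X) (𝒜 : Bool → Set (Set X)) (h𝒜 : ∀ i, #(𝒜 i) < 𝔠) :
    ∃ p : Bool → X, p false + p true = x ∧
      ∀ i, ∀ A ∈ 𝒜 i, A ∈ residual X → p i ∈ A := by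
  obtain ⟨z, hz⟩ := exists_forall_mem_of_mk_lt_covMeagre
    (𝒜 := 𝒜 false ∪ (Homeomorph.subLeft x ⁻¹' ·) '' 𝒜 true)
    (hcov ▸ mk_union_lt_continuum (h𝒜 false) (mk_image_le.trans_lt (h𝒜 true)))
  refine ⟨fun i => if i then x - z else z, by simp, ?_⟩
  rintro (_ | _) A hA hres
  · exact hz A (.inl hA) hres
  · simpa using hz _ (.inr ⟨A, hA, rfl⟩) ((Homeomorph.subLeft x).preimage_mem_residual hres)

theorem IsMeagre.exists_opens_iInter [BaireSpace X] {M : Set X} (hM : IsMeagre M) :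
    ∃ U : ℕ → Opens X,
      (⋂ n, (U n : Set X)) ∈ residual X ∧ M ⊆ (⋂ n, (U n : Set X))ᶜ := by
  obtain ⟨t, htM, htGδ, htd⟩ := mem_residual.1 hM
  obtain ⟨f, hfo, rfl⟩ := htGδ.eq_iInter_nat
  exact ⟨fun n => ⟨f n, hfo n⟩, residual_of_dense_Gδ htGδ htd, subset_compl_comm.1 htM⟩

end Meagre

section Pi

variable {ι α : Type*} [DecidableEq ι] [Infinite ι] [TopologicalSpace α]

theorem exists_update_mem_of_mem_nhds {x : ι → α} {O : Set (ι → α)} (hO : O ∈ 𝓝 x) :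
    ∃ k, ∀ a, update x k a ∈ O := by
  rw [nhds_pi, Filter.mem_pi'] at hO
  obtain ⟨I, t, ht, hIO⟩ := hO
  obtain ⟨k, hk⟩ := Infinite.exists_notMem_finset I
  refine ⟨k, fun a => hIO fun i hi => ?_⟩
  rw [update_of_ne (ne_of_mem_of_not_mem (Finset.mem_coe.1 hi) hk)]
  exact mem_of_mem_nhds (ht i)

theorem compl_singleton_mem_residual_pi [T1Space α] [Nontrivial α] (x : ι → α) :
    {x}ᶜ ∈ residual (ι → α) := by
  refine residual_of_dense_open isOpen_compl_singleton fun y =>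
    mem_closure_iff_nhds.2 fun O hO => ?_
  obtain ⟨k, hk⟩ := exists_update_mem_of_mem_nhds hO
  obtain ⟨a, ha⟩ := exists_ne (x k)
  exact ⟨update y k a, hk a, fun h => ha (by simpa using congrFun h k)⟩

theorem setOf_exists_apply_mem_residual [DiscreteTopology α] {R : ι → α → Prop}
    (hR : ∀ k, ∃ a, R k a) : {g : ι → α | ∃ k, R k (g k)} ∈ residual (ι → α) := by
  refine residual_of_dense_open ?_ fun x => mem_closure_iff_nhds.2 fun O hO => ?_
  · rw [ofPred_exists]
    exact isOpen_iUnion fun k => (isOpen_discrete {a | R k a}).preimage (continuous_apply k)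
  · obtain ⟨k, hk⟩ := exists_update_mem_of_mem_nhds hO
    obtain ⟨a, ha⟩ := hR k
    exact ⟨update x k a, hk a, k, by simpa using ha⟩

end Pi

def OmegaCovers {X : Type*} (U : ℕ → Set X) (P : Set X) : Prop :=
  ∀ F : Finset X, ↑F ⊆ P → ∃ j, ↑F ⊆ U j

section Captures

variable {X : Type*} [TopologicalSpace X] [SecondCountableTopology X]

def ContainsMeets (F : Finset X) (w : List (countableBasis X)) (S : Set X) : Prop :=
  ↑F ⊆ S ∧ ∀ W ∈ w, ((W : Set X) ∩ S).Nonempty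

/-- Requiring `V k` to meet arbitrary basic open sets as well makes every `captureSet V F w`
dense, so that a generic new point can be added to `F` (`captures_insert`). -/
def Captures (V : ℕ → Set X) (F : Finset X) : Prop :=
  ∀ w, ∃ k, ContainsMeets F w (V k)

def captureSet (V : ℕ → Set X) (F : Finset X) (w : List (countableBasis X)) : Set X :=
  ⋃ (k) (_ : ContainsMeets F w (V k)), V k

theorem Captures.captureSet_mem_residual {V : ℕ → Set X} {F : Finset X} (h : Captures V F)
    (hV : ∀ k, IsOpen (V k)) (w : List (countableBasis X)) : captureSet V F w ∈ residual X := by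
  refine residual_of_dense_open (isOpen_iUnion fun k => isOpen_iUnion fun _ => hV k) ?_
  refine (isBasis_countableBasis X).dense_iff.2 fun o ho _ => ?_
  obtain ⟨k, hF, hmeets⟩ := h (⟨o, ho⟩ :: w)
  obtain ⟨y, hyo, hyk⟩ := hmeets ⟨o, ho⟩ List.mem_cons_self
  exact ⟨y, hyo,
    mem_iUnion₂.2 ⟨k, ⟨hF, fun W hW => hmeets W (List.mem_cons_of_mem _ hW)⟩, hyk⟩⟩

theorem captures_insert [DecidableEq X] {V : ℕ → Set X} {F : Finset X} {z : X}
    (h : ∀ w, z ∈ captureSet V F w) : Captures V (insert z F) := fun w => by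
  obtain ⟨k, ⟨hF, hmeets⟩, hz⟩ := mem_iUnion₂.1 (h w)
  exact ⟨k, by simpa [insert_subset_iff] using And.intro hz hF, hmeets⟩

theorem exists_finset_containsMeets {P : Set X} (hP : Dense P) {F : Finset X} (hF : ↑F ⊆ P)
    (w : List (countableBasis X)) :
    ∃ F' : Finset X, ↑F' ⊆ P ∧ ∀ S, ↑F' ⊆ S → ContainsMeets F w S := by
  classical
  induction w with
  | nil => exact ⟨F, hF, fun S hS => ⟨hS, by simp⟩⟩
  | cons W w ih =>
    obtain ⟨F', hF'P, hF'⟩ := ih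
    obtain ⟨q, hqW, hqP⟩ := hP.inter_open_nonempty W (isOpen_of_mem_countableBasis W.2)
      (nonempty_of_mem_countableBasis W.2)
    refine ⟨insert q F', by simpa [insert_subset_iff] using And.intro hqP hF'P, fun S hS => ?_⟩
    rw [Finset.coe_insert, insert_subset_iff] at hS
    obtain ⟨hFS, hw⟩ := hF' S hS.2
    exact ⟨hFS, List.forall_mem_cons.2 ⟨⟨q, hqW, hS.1⟩, hw⟩⟩

end Captures

/-- The index sequence is read off a point of `ℤ^ℕ` avoiding fewer than `𝔠` meagre sets. -/
theorem exists_selection_captures {X : Type} [TopologicalSpace X] [SecondCountableTopology X]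
    (hcov : covMeagre (ℕ → ℤ) = 𝔠) {P : Set X} (hP : Dense P) (hPc : #P < 𝔠)
    (U : ℕ → ℕ → Set X) (hU : ∀ n, OmegaCovers (U n) P) :
    ∃ c : ℕ → ℕ, ∀ F : Finset X, ↑F ⊆ P → Captures (fun k => U k (c k)) F := by
  obtain ⟨g, hg⟩ := exists_forall_mem_of_mk_lt_covMeagre
    (𝒜 := range fun t : {F : Finset X // ↑F ⊆ P} × List (countableBasis X) =>
      {g : ℕ → ℤ | ∃ k, ContainsMeets t.1.1 t.2 (U k (g k).natAbs)})
    (hcov ▸ mk_range_le.trans_lt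
      (mk_prod_lt_continuum (mk_finset_subset_lt_continuum hPc) mk_lt_continuum_of_countable))
  refine ⟨fun k => (g k).natAbs, fun F hF w =>
    hg _ ⟨(⟨F, hF⟩, w), rfl⟩
      (setOf_exists_apply_mem_residual (R := fun k (a : ℤ) => ContainsMeets F w (U k a.natAbs))
        fun k => ?_)⟩
  obtain ⟨F', hF'P, hF'⟩ := exists_finset_containsMeets hP hF w
  obtain ⟨j, hj⟩ := hU k F' hF'P
  exact ⟨j, hF' _ (by simpa using hj)⟩

theorem exists_forall_spec_of_wellFoundedLT {ι α : Type*} [Preorder ι] [WellFoundedLT ι]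
    (P : ∀ β : ι, (Iio β → α) → α → Prop) (h : ∀ β prev, ∃ a, P β prev a) :
    ∃ G : ι → α, ∀ β, P β (fun γ => G γ) (G β) := by
  refine ⟨wellFounded_lt.fix fun β prev => (h β fun γ => prev γ γ.2).choose, fun β => ?_⟩
  rw [wellFounded_lt.fix_eq]
  exact (h β _).choose_spec

abbrev Stage : Type := Cardinal.continuum.ord.ToType

theorem mk_stage : #Stage = 𝔠 := mk_ord_toType _

theorem mk_Iio_stage_lt (β : Stage) : #(Iio β) < 𝔠 := by
  simpa using mk_Iio_lt β

theorem mk_Iic_stage_lt (β : Stage) : #(Iic β) < 𝔠 := by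
  rw [← Iio_insert]
  exact mk_insert_le.trans_lt
    (add_lt_of_lt aleph0_le_continuum (mk_Iio_stage_lt β)
      (one_lt_aleph0.trans aleph0_lt_continuum))

/-- What stage `β` takes care of: a sequence of enumerated countable families of open sets
(towards `S1(Ω,Ω)`), a `Gδ` set (towards the Luzin property) and a point (towards
`L₀ + L₁ = ℤ^ℕ`). -/
abbrev Requirement : Type :=
  (ℕ → ℕ → Opens (ℕ → ℤ)) × (ℕ → Opens (ℕ → ℤ)) × (ℕ → ℤ)

theorem mk_requirement_le : #Requirement ≤ 𝔠 :=
  have hopens := mk_opens_le_continuum (ℕ → ℤ)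
  mk_prod_le_continuum (mk_nat_fun_le_continuum (mk_nat_fun_le_continuum hopens))
    (mk_prod_le_continuum (mk_nat_fun_le_continuum hopens)
      (mk_nat_fun_le_continuum (mk_int.trans_le aleph0_le_continuum)))

noncomputable def requirement : Stage → Requirement :=
  invFun ((le_def Requirement Stage).1 (mk_stage ▸ mk_requirement_le)).some

theorem requirement_surjective : Surjective requirement :=
  invFun_surjective ((le_def Requirement Stage).1 (mk_stage ▸ mk_requirement_le)).some.injective

def reqCover (β : Stage) (n j : ℕ) : Set (ℕ → ℤ) := (requirement β).1 n j

def reqGδ (β : Stage) : Set (ℕ → ℤ) := ⋂ n, ((requirement β).2.1 n : Set (ℕ → ℤ))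

def selection (β : Stage) (c : ℕ → ℕ) (k : ℕ) : Set (ℕ → ℤ) := reqCover β k (c k)

theorem isOpen_selection (β : Stage) (c : ℕ → ℕ) (k : ℕ) : IsOpen (selection β c k) :=
  ((requirement β).1 k (c k)).isOpen

structure StageData where
  index : Bool → ℕ → ℕ
  point : Bool → ℕ → ℤ

/-- The countable dense set is there from the start, so that `exists_selection_captures`
applies at every stage. -/
def earlier {β : Stage} (prev : Iio β → StageData) (i : Bool) : Set (ℕ → ℤ) :=
  range (denseSeq (ℕ → ℤ)) ∪ range fun γ => (prev γ).point i

theorem dense_earlier {β : Stage} (prev : Iio β → StageData) (i : Bool) :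
    Dense (earlier prev i) :=
  (denseRange_denseSeq _).mono subset_union_left

theorem mk_earlier_lt {β : Stage} (prev : Iio β → StageData) (i : Bool) :
    #(earlier prev i) < 𝔠 :=
  mk_union_lt_continuum ((countable_range _).le_aleph0.trans_lt aleph0_lt_continuum)
    (mk_range_le.trans_lt (mk_Iio_stage_lt β))

structure StageSpec (β : Stage) (prev : Iio β → StageData) (d : StageData) : Prop where
  captures : ∀ i, (∀ n, OmegaCovers (reqCover β n) (earlier prev i)) →
    ∀ F : Finset (ℕ → ℤ), ↑F ⊆ earlier prev i → Captures (selection β (d.index i)) F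
  add_eq : d.point false + d.point true = (requirement β).2.2
  mem_reqGδ : ∀ i (γ : Iic β), reqGδ γ ∈ residual (ℕ → ℤ) → d.point i ∈ reqGδ γ
  ne : ∀ i (γ : Iio β), d.point i ≠ (prev γ).point i
  mem_captureSet_prev : ∀ i (γ : Iio β) (F : Finset (ℕ → ℤ)) w, ↑F ⊆ earlier prev i →
    captureSet (selection γ ((prev γ).index i)) F w ∈ residual (ℕ → ℤ) →
    d.point i ∈ captureSet (selection γ ((prev γ).index i)) F w
  mem_captureSet_self : ∀ i (F : Finset (ℕ → ℤ)) w, ↑F ⊆ earlier prev i →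
    captureSet (selection β (d.index i)) F w ∈ residual (ℕ → ℤ) →
    d.point i ∈ captureSet (selection β (d.index i)) F w

theorem exists_stageSpec (hcov : covMeagre (ℕ → ℤ) = 𝔠) (β : Stage)
    (prev : Iio β → StageData) : ∃ d, StageSpec β prev d := by
  have hindex : ∀ i, ∃ c : ℕ → ℕ, (∀ n, OmegaCovers (reqCover β n) (earlier prev i)) →
      ∀ F : Finset (ℕ → ℤ), ↑F ⊆ earlier prev i → Captures (selection β c) F := by
    intro i
    by_cases hU : ∀ n, OmegaCovers (reqCover β n) (earlier prev i)
    · obtain ⟨c, hc⟩ := exists_selection_captures hcov (dense_earlier prev i)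
        (mk_earlier_lt prev i) _ hU
      exact ⟨c, fun _ => hc⟩
    · exact ⟨0, fun h => absurd h hU⟩
  choose c hc using hindex
  let Fins (i : Bool) := {F : Finset (ℕ → ℤ) // ↑F ⊆ earlier prev i}
  let Lists := List (countableBasis (ℕ → ℤ))
  let 𝒜 (i : Bool) : Set (Set (ℕ → ℤ)) :=
    ((range fun γ : Iic β => reqGδ γ) ∪ range fun γ : Iio β => {(prev γ).point i}ᶜ) ∪
      ((range fun t : Iio β × Fins i × Lists =>
          captureSet (selection t.1 ((prev t.1).index i)) t.2.1 t.2.2) ∪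
        range fun t : Fins i × Lists => captureSet (selection β (c i)) t.1 t.2)
  have hFins (i : Bool) : #(Fins i) < 𝔠 := mk_finset_subset_lt_continuum (mk_earlier_lt prev i)
  have hLists : #Lists < 𝔠 := mk_lt_continuum_of_countable
  have h𝒜 (i : Bool) : #(𝒜 i) < 𝔠 :=
    mk_union_lt_continuum
      (mk_union_lt_continuum (mk_range_le.trans_lt (mk_Iic_stage_lt β))
        (mk_range_le.trans_lt (mk_Iio_stage_lt β)))
      (mk_union_lt_continuum
        (mk_range_le.trans_lt (mk_prod_lt_continuum (mk_Iio_stage_lt β)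
          (mk_prod_lt_continuum (hFins i) hLists)))
        (mk_range_le.trans_lt (mk_prod_lt_continuum (hFins i) hLists)))
  obtain ⟨p, hadd, hp⟩ := exists_add_eq_forall_mem hcov (requirement β).2.2 𝒜 h𝒜
  exact ⟨⟨c, p⟩, hc, hadd, fun i γ => hp i _ (.inl (.inl ⟨γ, rfl⟩)),
    fun i γ => hp i _ (.inl (.inr ⟨γ, rfl⟩)) (compl_singleton_mem_residual_pi _),
    fun i γ F w hF => hp i _ (.inr (.inl ⟨(γ, ⟨F, hF⟩, w), rfl⟩)),
    fun i F w hF => hp i _ (.inr (.inr ⟨(⟨F, hF⟩, w), rfl⟩))⟩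

def IsConstruction (G : Stage → StageData) : Prop :=
  ∀ β, StageSpec β (fun γ => G γ) (G β)

theorem exists_isConstruction (hcov : covMeagre (ℕ → ℤ) = 𝔠) : ∃ G, IsConstruction G :=
  exists_forall_spec_of_wellFoundedLT StageSpec (exists_stageSpec hcov)

def luzinSet (G : Stage → StageData) (i : Bool) : Set (ℕ → ℤ) :=
  range (denseSeq (ℕ → ℤ)) ∪ range fun β => (G β).point i

open Classical in
noncomputable def stageOf (G : Stage → StageData) (i : Bool) (x : ℕ → ℤ) : WithBot Stage :=
  if h : ∃ β, (G β).point i = x then h.choose else ⊥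

theorem point_stageOf {G : Stage → StageData} {i : Bool} {x : ℕ → ℤ} {β : Stage}
    (h : stageOf G i x = β) : (G β).point i = x := by
  unfold stageOf at h
  split_ifs at h with hx
  · exact WithBot.coe_inj.1 h ▸ hx.choose_spec
  · exact absurd h WithBot.bot_ne_coe

namespace IsConstruction

variable {G : Stage → StageData}

theorem point_injective (hG : IsConstruction G) (i : Bool) : Injective fun β => (G β).point i :=
  Injective.of_lt_imp_ne fun β γ hβγ h => (hG γ).ne i ⟨β, hβγ⟩ h.symm

theorem earlier_subset_luzinSet (β : Stage) (i : Bool) :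
    earlier (fun γ : Iio β => G γ) i ⊆ luzinSet G i :=
  union_subset_union_right _ (range_comp_subset_range Subtype.val fun β => (G β).point i)

theorem stageOf_point (hG : IsConstruction G) (i : Bool) (β : Stage) :
    stageOf G i ((G β).point i) = β := by
  have hx : ∃ γ, (G γ).point i = (G β).point i := ⟨β, rfl⟩
  rw [stageOf, dif_pos hx]
  exact congrArg _ (hG.point_injective i hx.choose_spec)

theorem mem_earlier_of_stageOf_lt (hG : IsConstruction G) {i : Bool} {x : ℕ → ℤ} {β : Stage}
    (hx : x ∈ luzinSet G i) (h : stageOf G i x < β) :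
    x ∈ earlier (fun γ : Iio β => G γ) i := by
  rcases hx with hx | ⟨γ, rfl⟩
  · exact .inl hx
  · rw [hG.stageOf_point] at h
    exact .inr ⟨⟨γ, WithBot.coe_lt_coe.1 h⟩, rfl⟩

theorem point_mem_captureSet (hG : IsConstruction G) {α β : Stage} (hαβ : α ≤ β) {i : Bool}
    {F : Finset (ℕ → ℤ)} {w : List (countableBasis (ℕ → ℤ))}
    (hF : ↑F ⊆ earlier (fun γ : Iio β => G γ) i)
    (h : captureSet (selection α ((G α).index i)) F w ∈ residual (ℕ → ℤ)) :
    (G β).point i ∈ captureSet (selection α ((G α).index i)) F w := by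
  obtain hlt | rfl := hαβ.lt_or_eq
  · exact (hG β).mem_captureSet_prev i ⟨α, hlt⟩ F w hF h
  · exact (hG α).mem_captureSet_self i F w hF h

/-- Induction on `F` by the stage of its latest point: once the other points of `F` are
captured, the latest one was chosen generic for the resulting dense open set. -/
theorem captures (hG : IsConstruction G) {α : Stage} {i : Bool}
    (hα : ∀ n, OmegaCovers (reqCover α n) (earlier (fun γ : Iio α => G γ) i))
    {F : Finset (ℕ → ℤ)} (hF : ↑F ⊆ luzinSet G i) :
    Captures (selection α ((G α).index i)) F := by
  classical
  induction F using Finset.induction_on_max_value (stageOf G i) with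
  | empty => exact (hG α).captures i hα ∅ (by simp)
  | insert a s has hmax ih =>
    rw [Finset.coe_insert, insert_subset_iff] at hF
    by_cases ha : stageOf G i a < α
    · refine (hG α).captures i hα _ fun x hx => ?_
      rcases Finset.mem_insert.1 hx with rfl | hx
      · exact hG.mem_earlier_of_stageOf_lt hF.1 ha
      · exact hG.mem_earlier_of_stageOf_lt (hF.2 hx) ((hmax x hx).trans_lt ha)
    · obtain ⟨β, hβ⟩ := WithBot.ne_bot_iff_exists.1
        ((WithBot.bot_lt_coe α).trans_le (not_lt.1 ha)).ne'
      have hαβ : α ≤ β := WithBot.coe_le_coe.1 (hβ ▸ not_lt.1 ha)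
      have hs : ↑s ⊆ earlier (fun γ : Iio β => G γ) i := fun x hx =>
        hG.mem_earlier_of_stageOf_lt (hF.2 hx) (lt_of_le_of_ne (hβ ▸ hmax x hx) fun hxβ =>
          has ((point_stageOf hxβ).symm.trans (point_stageOf hβ.symm) ▸ hx))
      refine captures_insert fun w => ?_
      rw [← point_stageOf hβ.symm]
      exact hG.point_mem_captureSet hαβ hs
        ((ih hF.2).captureSet_mem_residual (isOpen_selection _ _) w)

theorem isLuzinZN (hG : IsConstruction G) (i : Bool) : IsLuzinZN (luzinSet G i) := by
  refine ⟨?_, fun M hM => ?_⟩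
  · calc 𝔠 = #Stage := mk_stage.symm
      _ ≤ #(luzinSet G i) :=
        mk_le_of_injective (f := fun β => ⟨(G β).point i, .inr ⟨β, rfl⟩⟩)
          fun β γ h => hG.point_injective i (congrArg Subtype.val h)
  · obtain ⟨U, hU, hMU⟩ := hM.exists_opens_iInter
    obtain ⟨γ, hγ⟩ := requirement_surjective (fun _ _ => ⊥, U, 0)
    have hsub :
        luzinSet G i ∩ M ⊆ range (denseSeq _) ∪ (fun β => (G β).point i) '' Iio γ := by
      rintro x ⟨hx | ⟨β, rfl⟩, hxM⟩
      · exact .inl hx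
      · refine .inr ⟨β, (not_le.1 fun hγβ => hMU hxM ?_ : β < γ), rfl⟩
        simpa [reqGδ, hγ] using
          (hG β).mem_reqGδ i ⟨γ, hγβ⟩ (by simpa [reqGδ, hγ] using hU)
    exact (mk_le_mk_of_subset hsub).trans_lt (mk_union_lt_continuum
      ((countable_range _).le_aleph0.trans_lt aleph0_lt_continuum)
      (mk_image_le.trans_lt (mk_Iio_stage_lt γ)))

theorem s1OmegaOmega (hG : IsConstruction G) (i : Bool) : S1OmegaOmega (luzinSet G i) := by
  intro 𝒰 h𝒰
  have hne : ∀ n, (𝒰 n).Nonempty := fun n =>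
    ((h𝒰 n).2.2.2 ∅ (empty_subset _) finite_empty).imp fun _ hU => hU.1
  choose f hf using fun n => (h𝒰 n).1.exists_eq_range (hne n)
  obtain ⟨α, hα⟩ := requirement_surjective
    (fun n j => ⟨f n j, (h𝒰 n).2.1 _ (hf n ▸ mem_range_self j)⟩, fun _ => ⊥, 0)
  have hcover : ∀ n, OmegaCovers (reqCover α n) (earlier (fun γ : Iio α => G γ) i) := by
    intro n F hF
    obtain ⟨U, hU, hFU⟩ :=
      (h𝒰 n).2.2.2 F (hF.trans (earlier_subset_luzinSet α i)) F.finite_toSet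
    rw [hf n] at hU
    obtain ⟨j, rfl⟩ := hU
    exact ⟨j, by simpa [reqCover, hα] using hFU⟩
  have hmem : ∀ n, selection α ((G α).index i) n ∈ 𝒰 n := fun n => by
    rw [hf n]
    exact ⟨(G α).index i n, by simp [selection, reqCover, hα]⟩
  refine ⟨selection α ((G α).index i), hmem, fun ⟨n, hn⟩ => (h𝒰 n).2.2.1 (hn ▸ hmem n),
    fun F hFL hFfin => ?_⟩
  obtain ⟨k, hk, -⟩ := hG.captures hcover (F := hFfin.toFinset) (by simpa using hFL) []
  exact ⟨_, ⟨k, rfl⟩, by simpa using hk⟩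

theorem luzinSet_add (hG : IsConstruction G) : luzinSet G false + luzinSet G true = Set.univ :=
  eq_univ_of_forall fun x => by
    obtain ⟨β, hβ⟩ := requirement_surjective (fun _ _ => ⊥, fun _ => ⊥, x)
    exact ⟨_, .inr ⟨β, rfl⟩, _, .inr ⟨β, rfl⟩, (hG β).add_eq.trans (by rw [hβ])⟩

end IsConstruction

/-- Assuming `cov(ℳ) = 𝔠` (for the space `ℤ^ℕ`), there are `𝔠`-Luzin sets
`L₀, L₁ ⊆ ℤ^ℕ` satisfying `S1(Ω,Ω)` with `L₀ + L₁ = ℤ^ℕ`. -/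
theorem stmt12
    (hcov : sInf {c : Cardinal | ∃ 𝒜 : Set (Set (ℕ → ℤ)),
        (∀ A ∈ 𝒜, IsMeagre A) ∧ ⋃₀ 𝒜 = Set.univ ∧ c = Cardinal.mk 𝒜}
      = Cardinal.continuum) :
    ∃ L₀ L₁ : Set (ℕ → ℤ), IsLuzinZN L₀ ∧ IsLuzinZN L₁ ∧
      S1OmegaOmega L₀ ∧ S1OmegaOmega L₁ ∧ L₀ + L₁ = Set.univ := by
  obtain ⟨G, hG⟩ := exists_isConstruction hcov
  exact ⟨luzinSet G false, luzinSet G true, hG.isLuzinZN false, hG.isLuzinZN true,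
    hG.s1OmegaOmega false, hG.s1OmegaOmega true, hG.luzinSet_add⟩
end

section
/- Assume that U is a nonprincipal ultrafilter on ℕ and that M ⊆ [ℕ]^∞ is meager (with respect to the topology [ℕ]^∞ inherits from P(ℕ), identified with the Cantor space 2^ℕ). Then for each a ∈ U there exist a₀, a₁ ∈ U ∖ M such that a₀ ∩ a₁ ⊆ a; in particular, U ∖ M is a subbase for U. -/
open Set Filter

/-- Density step: given a closed nowhere dense set `F` in Cantor space and `m`, there is
`m' > m` and values `τ` on `[m, m')` such that any `y` matching `τ` on `[m, m')` avoids `F`,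
regardless of its values elsewhere. -/
lemma stmt14_tube (F : Set (ℕ → Bool)) (hcl : IsClosed F) (hnd : IsNowhereDense F) (m : ℕ) :
    ∃ m', m < m' ∧ ∃ τ : ℕ → Bool,
      ∀ y : ℕ → Bool, (∀ i, m ≤ i → i < m' → y i = τ i) → y ∉ F := by
  have hdense : Dense Fᶜ := ((isClosed_isNowhereDense_iff_compl (s := F)).1 ⟨hcl, hnd⟩).2
  -- handle all initial configurations one by one
  have main : ∀ s : Finset (Fin m → Bool), ∃ m₂, m ≤ m₂ ∧ ∃ τ : ℕ → Bool,
      ∀ y : ℕ → Bool, (fun i : Fin m => y i) ∈ s →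
        (∀ i, m ≤ i → i < m₂ → y i = τ i) → y ∉ F := by
    intro s
    induction s using Finset.induction_on with
    | empty => exact ⟨m, le_rfl, fun _ => false, fun y hy => absurd hy (Finset.notMem_empty _)⟩
    | @insert σ s hσ IH =>
      obtain ⟨m₂, hm₂, τ, hτ⟩ := IH
      set z : ℕ → Bool := fun i => if h : i < m then σ ⟨i, h⟩ else τ i with hz
      have hopen : IsOpen (PiNat.cylinder z m₂) := PiNat.isOpen_cylinder _ z m₂
      obtain ⟨w, hw1, hw2⟩ : ((PiNat.cylinder z m₂) ∩ Fᶜ).Nonempty :=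
        hdense.inter_open_nonempty _ hopen ⟨z, PiNat.self_mem_cylinder z m₂⟩
      -- w is in the open set Fᶜ; find a cylinder around w inside Fᶜ
      obtain ⟨v, ⟨x', n', rfl⟩, hwv, hvF⟩ :=
        (PiNat.isTopologicalBasis_cylinders (fun _ : ℕ => Bool)).exists_subset_of_mem_open
          hw2 hcl.isOpen_compl
      have hcylw : PiNat.cylinder w n' ⊆ Fᶜ := by
        rwa [PiNat.mem_cylinder_iff_eq.1 hwv]
      refine ⟨max n' m₂, le_trans hm₂ (le_max_right _ _), w, ?_⟩
      intro y hy hagr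
      rcases Finset.mem_insert.1 hy with hyσ | hys
      · -- y's initial configuration is σ : show y ∈ cylinder w n'
        have hmem : y ∈ PiNat.cylinder w n' := by
          intro i hi
          by_cases him : i < m
          · have h1 : y i = σ ⟨i, him⟩ := congrFun hyσ ⟨i, him⟩
            have h2 : w i = z i := hw1 i (lt_of_lt_of_le him hm₂)
            rw [h1, h2, hz]; simp [him]
          · exact hagr i (le_of_not_gt him) (lt_of_lt_of_le hi (le_max_left _ _))
        exact fun hF => hcylw hmem hF
      · -- use the inductive hypothesis
        refine hτ y hys ?_
        intro i hmi hi₂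
        have h1 : y i = w i := hagr i hmi (lt_of_lt_of_le hi₂ (le_max_right _ _))
        have h2 : w i = z i := hw1 i hi₂
        rw [h1, h2, hz]; simp [Nat.not_lt.2 hmi]
  obtain ⟨m₂, hm₂, τ, hτ⟩ := main Finset.univ
  refine ⟨m₂ + 1, Nat.lt_succ_of_le hm₂, τ, ?_⟩
  intro y hy
  exact hτ y (Finset.mem_univ _) fun i h1 h2 => hy i h1 (Nat.lt_succ_of_lt h2)

/-- Interval sequence avoiding a countable family of closed nowhere dense sets. -/
lemma stmt14_seq (F : ℕ → Set (ℕ → Bool)) (hcl : ∀ k, IsClosed (F k))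
    (hnd : ∀ k, IsNowhereDense (F k)) :
    ∃ (e : ℕ → ℕ) (x : ℕ → ℕ → Bool), e 0 = 0 ∧ StrictMono e ∧
      ∀ k (y : ℕ → Bool), (∀ i, e k ≤ i → i < e (k+1) → y i = x k i) → y ∉ F k := by
  have h : ∀ k m, ∃ p : ℕ × (ℕ → Bool), m < p.1 ∧
      ∀ y : ℕ → Bool, (∀ i, m ≤ i → i < p.1 → y i = p.2 i) → y ∉ F k := by
    intro k m
    obtain ⟨m', hm', τ, hτ⟩ := stmt14_tube (F k) (hcl k) (hnd k) m
    exact ⟨(m', τ), hm', hτ⟩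
  choose g hg1 hg2 using h
  refine ⟨fun k => Nat.rec 0 (fun k' prev => (g k' prev).1) k,
    fun k => (g k (Nat.rec 0 (fun k' prev => (g k' prev).1) k)).2, rfl, ?_, ?_⟩
  · exact strictMono_nat_of_lt_succ fun k => hg1 k _
  · intro k y hy
    exact hg2 k _ y hy

/-- If `U` is a nonprincipal ultrafilter on `ℕ` and `M ⊆ [ℕ]^∞` is meager (in the Cantor
space `2^ℕ`, identified with `P(ℕ)`), then for each `a ∈ U` there are `a₀, a₁ ∈ U ∖ M`
with `a₀ ∩ a₁ ⊆ a`; in particular `U ∖ M` is a subbase for `U`. Here subsets of `ℕ` are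
coded by their characteristic functions `ℕ → Bool`. -/
theorem stmt14 (U : Ultrafilter ℕ) (hU : ∀ s ∈ U, s.Infinite)
    (M : Set (ℕ → Bool)) (hM : IsMeagre M)
    (hMinf : ∀ x ∈ M, {n | x n = true}.Infinite) :
    ∀ a ∈ U, ∃ a₀ a₁ : ℕ → Bool,
      {n | a₀ n = true} ∈ U ∧ {n | a₁ n = true} ∈ U ∧
      a₀ ∉ M ∧ a₁ ∉ M ∧
      {n | a₀ n = true} ∩ {n | a₁ n = true} ⊆ a := by
  classical
  intro a ha
  -- cover M by countably many closed nowhere dense sets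
  obtain ⟨S, hSnd, hScnt, hSsub⟩ := isMeagre_iff_countable_union_isNowhereDense.1 hM
  obtain ⟨f, hf⟩ : ∃ f : ℕ → Set (ℕ → Bool), insert ∅ S = range f :=
    ((hScnt.insert ∅)).exists_eq_range (insert_nonempty _ _)
  have hfnd : ∀ j, IsNowhereDense (f j) := by
    intro j
    have hmem : f j ∈ insert ∅ S := hf ▸ mem_range_self j
    rcases hmem with h | h
    · rw [h]; exact isNowhereDense_empty
    · exact hSnd _ h
  have hMsub : ∀ z ∈ M, ∃ j, z ∈ f j := by
    intro z hz
    obtain ⟨t, htS, hzt⟩ := hSsub hz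
    have ht' : t ∈ insert ∅ S := mem_insert_of_mem _ htS
    rw [hf] at ht'
    obtain ⟨j, rfl⟩ := ht'
    exact ⟨j, hzt⟩
  -- the family we dodge: F k = closure (f (k / 3))
  obtain ⟨e, x, he0, hemono, havoid⟩ := stmt14_seq (fun k => closure (f (k / 3)))
    (fun k => isClosed_closure) (fun k => (hfnd (k / 3)).closure)
  -- interval index
  set idx : ℕ → ℕ := fun i => Nat.findGreatest (fun k => e k ≤ i) i with hidx
  have hidx_le : ∀ i, e (idx i) ≤ i := fun i =>
    Nat.findGreatest_spec (P := fun k => e k ≤ i) (Nat.zero_le i) (by simp [he0])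
  have hidx_lt : ∀ i, i < e (idx i + 1) := by
    intro i
    by_contra h
    push_neg at h
    have h1 : idx i + 1 ≤ i := le_trans hemono.le_apply h
    have h2 := Nat.le_findGreatest (P := fun k => e k ≤ i) h1 h
    simp only [hidx] at h2
    omega
  have hidx_eq : ∀ k i, e k ≤ i → i < e (k + 1) → idx i = k := by
    intro k i h1 h2
    have hk : k ≤ idx i := Nat.le_findGreatest (P := fun k => e k ≤ i) (le_trans hemono.le_apply h1) h1
    have hk2 : idx i ≤ k := by
      by_contra hlt
      push_neg at hlt
      have h3 : e (k + 1) ≤ e (idx i) := hemono.monotone hlt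
      have h4 := hidx_le i
      omega
    omega
  set C : ℕ → Set ℕ := fun r => {i | idx i % 3 = r} with hC
  -- main construction, given the residue class r with C r ∈ U
  have key : ∀ r s t : ℕ, s < 3 → t < 3 → r ≠ s → r ≠ t → s ≠ t → C r ∈ U →
      ∃ a₀ a₁ : ℕ → Bool,
        {n | a₀ n = true} ∈ U ∧ {n | a₁ n = true} ∈ U ∧
        a₀ ∉ M ∧ a₁ ∉ M ∧
        {n | a₀ n = true} ∩ {n | a₁ n = true} ⊆ a := by
    intro r s t hs3 ht3 hrs hrt hst hCr
    set a₀ : ℕ → Bool := fun i =>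
      if idx i % 3 = r then decide (i ∈ a) else if idx i % 3 = s then x (idx i) i else false
      with ha₀
    set a₁ : ℕ → Bool := fun i =>
      if idx i % 3 = r then decide (i ∈ a) else if idx i % 3 = t then x (idx i) i else false
      with ha₁
    -- membership in U
    have hmemU : ∀ b : ℕ → Bool, (∀ i, i ∈ a → idx i % 3 = r → b i = true) →
        {n | b n = true} ∈ U := by
      intro b hb
      have hin : (a ∩ C r : Set ℕ) ∈ U := inter_mem ha hCr
      exact mem_of_superset hin fun i hi => hb i hi.1 hi.2
    -- avoiding M
    have hnotM : ∀ (b : ℕ → Bool) (s' : ℕ), s' < 3 →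
        (∀ i, idx i % 3 = s' → b i = x (idx i) i) → b ∉ M := by
      intro b s' hs' hb hbM
      obtain ⟨j, hj⟩ := hMsub b hbM
      have hk : b ∉ closure (f ((3 * j + s') / 3)) := by
        apply havoid (3 * j + s')
        intro i h1 h2
        have hidxi : idx i = 3 * j + s' := hidx_eq _ _ h1 h2
        have hbi : b i = x (idx i) i := hb i (by rw [hidxi]; omega)
        rw [hbi, hidxi]
      apply hk
      have hdiv : (3 * j + s') / 3 = j := by omega
      rw [hdiv]
      exact subset_closure hj
    refine ⟨a₀, a₁, ?_, ?_, ?_, ?_, ?_⟩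
    · exact hmemU a₀ fun i hi hir => by simp [ha₀, hir, hi]
    · exact hmemU a₁ fun i hi hir => by simp [ha₁, hir, hi]
    · refine hnotM a₀ s hs3 fun i hi => ?_
      have hne : ¬ idx i % 3 = r := by omega
      simp [ha₀, hne, hi, Ne.symm hrs]
    · refine hnotM a₁ t ht3 fun i hi => ?_
      have hne : ¬ idx i % 3 = r := by omega
      simp [ha₁, hne, hi, Ne.symm hrt]
    · rintro i ⟨h0, h1⟩
      simp only [mem_setOf_eq] at h0 h1
      by_cases hir : idx i % 3 = r
      · simpa [ha₀, hir] using h0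
      · exfalso
        have hs' : idx i % 3 = s := by
          by_contra h
          simp [ha₀, hir, h] at h0
        have ht' : idx i % 3 = t := by
          by_contra h
          simp [ha₁, hir, h] at h1
        omega
  -- one of the three residue classes lies in U
  have hunion : (C 0 ∪ (C 1 ∪ C 2) : Set ℕ) ∈ U := by
    have huniv : (C 0 ∪ (C 1 ∪ C 2) : Set ℕ) = univ := by
      ext i
      simp only [hC, mem_union, mem_setOf_eq, mem_univ, iff_true]
      omega
    rw [huniv]
    exact univ_mem
  rcases (Ultrafilter.union_mem_iff).1 hunion with h0 | h12
  · exact key 0 1 2 (by norm_num) (by norm_num) (by norm_num) (by norm_num) (by norm_num) h0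
  rcases (Ultrafilter.union_mem_iff).1 h12 with h1 | h2
  · exact key 1 0 2 (by norm_num) (by norm_num) (by norm_num) (by norm_num) (by norm_num) h1
  · exact key 2 0 1 (by norm_num) (by norm_num) (by norm_num) (by norm_num) (by norm_num) h2
end

section
/- If NCF fails (i.e., there exist two nonprincipal ultrafilters on ℕ that are not Rudin–Keisler compatible), then there exist nonprincipal ultrafilters ℱ₁ and ℱ₂ on ℕ such that for each increasing h ∈ ℕ^ℕ there exist a₁ ∈ ℱ₁/h and a₂ ∈ ℱ₂/h such that |n − m| > 1 for all n ∈ a₁ and m ∈ a₂. -/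
open Set Filter

/-- The finite intersection property: every finite subfamily has nonempty intersection. -/
def FIP (S : Set (Set ℕ)) : Prop :=
  ∀ F : Finset (Set ℕ), ↑F ⊆ S → (⋂ a ∈ F, a).Nonempty

/-- Ultrafilters `F₁, F₂` on `ℕ` are Rudin–Keisler compatible: there is an increasing
`h ∈ ℕ^ℕ` such that `F₁/h ∪ F₂/h` has the finite intersection property. -/
def RKCompatible (F₁ F₂ : Ultrafilter ℕ) : Prop :=
  ∃ h : ℕ → ℕ, StrictMono h ∧ h 0 = 0 ∧
    FIP ({b | ∃ a ∈ F₁, b = divH a h} ∪ {b | ∃ a ∈ F₂, b = divH a h})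

lemma divH_mono {a a' : Set ℕ} (g : ℕ → ℕ) (hsub : a ⊆ a') : divH a g ⊆ divH a' g := by
  rintro n ⟨x, hx1, hx2⟩
  exact ⟨x, hsub hx1, hx2⟩

/-- From failure of FIP extract a disjoint pair. -/
lemma extract_disjoint (F₁ F₂ : Ultrafilter ℕ) (g : ℕ → ℕ)
    (hfip : ¬ FIP ({b | ∃ a ∈ F₁, b = divH a g} ∪ {b | ∃ a ∈ F₂, b = divH a g})) :
    ∃ b ∈ F₁, ∃ c ∈ F₂, divH b g ∩ divH c g = ∅ := by
  classical
  by_contra hcon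
  push_neg at hcon
  apply hfip
  intro F hF
  have hP : ∀ s ∈ F, ∃ a, (a ∈ F₁ ∨ a ∈ F₂) ∧ s = divH a g := by
    intro s hs
    rcases hF hs with ⟨a, ha, rfl⟩ | ⟨a, ha, rfl⟩
    · exact ⟨a, Or.inl ha, rfl⟩
    · exact ⟨a, Or.inr ha, rfl⟩
  choose! w hw hws using hP
  set b : Set ℕ := ⋂ s ∈ F, (if w s ∈ F₁ then w s else Set.univ) with hb
  set c : Set ℕ := ⋂ s ∈ F, (if w s ∈ F₁ then Set.univ else w s) with hc
  have hbF : b ∈ F₁ := by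
    rw [hb, ← Ultrafilter.mem_coe, Filter.biInter_finset_mem]
    intro s hs
    split
    · assumption
    · exact Filter.univ_mem
  have hcF : c ∈ F₂ := by
    rw [hc, ← Ultrafilter.mem_coe, Filter.biInter_finset_mem]
    intro s hs
    split
    · exact Filter.univ_mem
    · rcases hw s hs with h1 | h2
      · exact absurd h1 (by assumption)
      · exact h2
  obtain ⟨x, hxb, hxc⟩ := hcon b hbF c hcF
  refine ⟨x, ?_⟩
  simp only [Set.mem_iInter]
  intro s hs
  rw [hws s hs]
  by_cases h1 : w s ∈ F₁
  · refine divH_mono g ?_ hxb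
    rw [hb]
    intro y hy
    have := Set.mem_iInter₂.mp hy s hs
    simpa [h1] using this
  · refine divH_mono g ?_ hxc
    rw [hc]
    intro y hy
    have := Set.mem_iInter₂.mp hy s hs
    simpa [h1] using this

lemma meet_lemma (h g : ℕ → ℕ) (b c : Set ℕ) (n m k : ℕ)
    (h1 : g k ≤ h n) (h2 : h (n + 1) ≤ g (k + 1))
    (h3 : g k ≤ h m) (h4 : h (m + 1) ≤ g (k + 1))
    (hn : n ∈ divH b h) (hm : m ∈ divH c h) : k ∈ divH b g ∩ divH c g := by
  rcases hn with ⟨x, hxb, hx1, hx2⟩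
  rcases hm with ⟨y, hyc, hy1, hy2⟩
  exact ⟨⟨x, hxb, le_trans h1 hx1, lt_of_lt_of_le hx2 h2⟩,
         ⟨y, hyc, le_trans h3 hy1, lt_of_lt_of_le hy2 h4⟩⟩

/-- If NCF fails, then there are nonprincipal ultrafilters `F₁, F₂` on `ℕ` such that for
each increasing `h` there are `a₁ ∈ F₁/h` and `a₂ ∈ F₂/h` with `|n − m| > 1` for all
`n ∈ a₁`, `m ∈ a₂`. -/
theorem stmt16
    (hfail : ∃ F₁ F₂ : Ultrafilter ℕ, (∀ s ∈ F₁, s.Infinite) ∧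
      (∀ s ∈ F₂, s.Infinite) ∧ ¬ RKCompatible F₁ F₂) :
    ∃ F₁ F₂ : Ultrafilter ℕ, (∀ s ∈ F₁, s.Infinite) ∧ (∀ s ∈ F₂, s.Infinite) ∧
      ∀ h : ℕ → ℕ, StrictMono h → h 0 = 0 →
        ∃ a₁, (∃ b ∈ F₁, a₁ = divH b h) ∧
          ∃ a₂, (∃ b ∈ F₂, a₂ = divH b h) ∧
            ∀ n ∈ a₁, ∀ m ∈ a₂, 1 < |(n : ℤ) - (m : ℤ)| := by
  obtain ⟨F₁, F₂, hF1, hF2, hnc⟩ := hfail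
  refine ⟨F₁, F₂, hF1, hF2, ?_⟩
  intro h hmono h0
  set g₁ : ℕ → ℕ := fun n => h (2 * n) with hg1
  set g₂ : ℕ → ℕ := fun n => h (2 * n - 1) with hg2
  have hg1mono : StrictMono g₁ := fun a b hab => hmono (by omega)
  have hg2mono : StrictMono g₂ := fun a b hab => hmono (by omega)
  have hg10 : g₁ 0 = 0 := by simp [hg1, h0]
  have hg20 : g₂ 0 = 0 := by simp [hg2, h0]
  have hfip1 : ¬ FIP ({s | ∃ a ∈ F₁, s = divH a g₁} ∪ {s | ∃ a ∈ F₂, s = divH a g₁}) :=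
    fun hf => hnc ⟨g₁, hg1mono, hg10, hf⟩
  have hfip2 : ¬ FIP ({s | ∃ a ∈ F₁, s = divH a g₂} ∪ {s | ∃ a ∈ F₂, s = divH a g₂}) :=
    fun hf => hnc ⟨g₂, hg2mono, hg20, hf⟩
  obtain ⟨b₁, hb₁, c₁, hc₁, hd₁⟩ := extract_disjoint F₁ F₂ g₁ hfip1
  obtain ⟨b₂, hb₂, c₂, hc₂, hd₂⟩ := extract_disjoint F₁ F₂ g₂ hfip2
  set b := b₁ ∩ b₂ with hbdef
  set c := c₁ ∩ c₂ with hcdef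
  refine ⟨divH b h, ⟨b, Filter.inter_mem hb₁ hb₂, rfl⟩,
          divH c h, ⟨c, Filter.inter_mem hc₁ hc₂, rfl⟩, ?_⟩
  intro n hn m hm
  by_contra hle
  push_neg at hle
  rw [abs_le] at hle
  -- derive contradiction from the three cases
  have key : ∀ (g : ℕ → ℕ) (k : ℕ), divH b₁ g ∩ divH c₁ g = ∅ ∨ divH b₂ g ∩ divH c₂ g = ∅ →
      g k ≤ h n → h (n + 1) ≤ g (k + 1) → g k ≤ h m → h (m + 1) ≤ g (k + 1) → False := by
    intro g k hdisj h1 h2 h3 h4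
    have hk := meet_lemma h g b c n m k h1 h2 h3 h4 hn hm
    rcases hdisj with hd | hd
    · have : k ∈ divH b₁ g ∩ divH c₁ g :=
        ⟨divH_mono g (Set.inter_subset_left) hk.1, divH_mono g (Set.inter_subset_left) hk.2⟩
      rw [hd] at this; exact this
    · have : k ∈ divH b₂ g ∩ divH c₂ g :=
        ⟨divH_mono g (Set.inter_subset_right) hk.1, divH_mono g (Set.inter_subset_right) hk.2⟩
      rw [hd] at this; exact this
  have hmon := hmono.monotone
  have hcase : n = m ∨ (m = n + 1 ∧ n % 2 = 0) ∨ (m = n + 1 ∧ n % 2 = 1) ∨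
      (n = m + 1 ∧ m % 2 = 0) ∨ (n = m + 1 ∧ m % 2 = 1) := by omega
  rcases hcase with rfl | ⟨rfl, hpar⟩ | ⟨rfl, hpar⟩ | ⟨rfl, hpar⟩ | ⟨rfl, hpar⟩
  · exact key g₁ (n / 2) (Or.inl hd₁) (hmon (by omega)) (hmon (by omega))
      (hmon (by omega)) (hmon (by omega))
  · exact key g₁ (n / 2) (Or.inl hd₁) (hmon (by omega)) (hmon (by omega))
      (hmon (by omega)) (hmon (by omega))
  · exact key g₂ ((n + 1) / 2) (Or.inr hd₂) (hmon (by omega)) (hmon (by omega))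
      (hmon (by omega)) (hmon (by omega))
  · exact key g₁ (m / 2) (Or.inl hd₁) (hmon (by omega)) (hmon (by omega))
      (hmon (by omega)) (hmon (by omega))
  · exact key g₂ ((m + 1) / 2) (Or.inr hd₂) (hmon (by omega)) (hmon (by omega))
      (hmon (by omega)) (hmon (by omega))
end

section
/- For each f ∈ ℕ^ℕ and each nonprincipal ultrafilter 𝒰 on ℕ, the family 𝒢_{𝒰,f} = {a ∈ [ℕ]^∞ : {n : f(n) ≤ next_a(n)} ∈ 𝒰} is groupwise dense. -/
open Set Filter

lemma exists_block (H : ℕ → ℕ) (hH : StrictMono H) (h0 : H 0 = 0) (n : ℕ) :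
    ∃ j, H j ≤ n ∧ n < H (j + 1) := by
  have hne : (0:ℕ) ∈ {j | H j ≤ n} := by simp [h0]
  have hbdd : BddAbove {j | H j ≤ n} := ⟨n, fun j hj => le_trans hH.le_apply hj⟩
  refine ⟨sSup {j | H j ≤ n}, Nat.sSup_mem ⟨0, hne⟩ hbdd, ?_⟩
  by_contra hle
  push_neg at hle
  have : sSup {j | H j ≤ n} + 1 ≤ sSup {j | H j ≤ n} := le_csSup hbdd hle
  omega

/-- Mildenberger's lemma: for each `f ∈ ℕ^ℕ` and each nonprincipal ultrafilter `U` on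
`ℕ`, the family `𝒢_{U,f} = {a ∈ [ℕ]^∞ : {n : f n ≤ next_a n} ∈ U}` is groupwise dense. -/
theorem stmt18 (f : ℕ → ℕ) (U : Ultrafilter ℕ) (hU : ∀ s ∈ U, s.Infinite) :
    GroupwiseDense {a : Set ℕ | a.Infinite ∧ {n | f n ≤ nextFun a n} ∈ U} := by
  refine ⟨fun a ha => ha.1, ?_, ?_⟩
  · rintro a ⟨ha, haU⟩ b hb hfin
    refine ⟨hb, ?_⟩
    obtain ⟨N, hN⟩ := hfin.bddAbove
    have hcof : {n : ℕ | N ≤ n} ∈ U := by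
      by_contra hc
      rw [← Ultrafilter.compl_mem_iff_notMem] at hc
      have hfin2 : ({n : ℕ | N ≤ n}ᶜ).Finite := by
        have : ({n : ℕ | N ≤ n}ᶜ : Set ℕ) ⊆ Set.Iio N := by
          intro x hx; simpa using hx
        exact (Set.finite_Iio N).subset this
      exact (hU _ hc) hfin2
    refine mem_of_superset (inter_mem haU hcof) ?_
    rintro n ⟨h1, h2⟩
    have hsub : {k | k ∈ b ∧ n < k} ⊆ {k | k ∈ a ∧ n < k} := by
      rintro k ⟨hkb, hkn⟩
      refine ⟨?_, hkn⟩
      by_contra hka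
      have hk := hN (⟨hkb, hka⟩ : k ∈ b \ a)
      simp only [mem_setOf_eq] at h2
      omega
    have hne : {k | k ∈ b ∧ n < k}.Nonempty := by
      obtain ⟨k, hk1, hk2⟩ := hb.exists_gt n
      exact ⟨k, hk1, hk2⟩
    have hmem := Nat.sInf_mem hne
    simp only [mem_setOf_eq] at h1 ⊢
    exact le_trans h1 (Nat.sInf_le (hsub hmem))
  · intro h hmono h0
    classical
    -- recursive sequence of block boundaries
    set k : ℕ → ℕ := fun j => Nat.rec 0 (fun _ prev => prev + 1 + (Finset.range (h prev)).sup f) j with hk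
    have hk0 : k 0 = 0 := rfl
    have hksucc : ∀ j, k (j + 1) = k j + 1 + (Finset.range (h (k j))).sup f := fun j => rfl
    have hkmono : StrictMono k := strictMono_nat_of_lt_succ (fun j => by rw [hksucc]; omega)
    have hkey : ∀ j, ∀ n, n < h (k j) → f n ≤ h (k (j + 1)) := by
      intro j n hn
      have h1 : f n ≤ (Finset.range (h (k j))).sup f :=
        Finset.le_sup (Finset.mem_range.mpr hn)
      have h2 : k (j + 1) ≤ h (k (j + 1)) := hmono.le_apply
      rw [hksucc] at h2 ⊢
      omega
    set H : ℕ → ℕ := fun j => h (k j) with hH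
    have hHmono : StrictMono H := hmono.comp hkmono
    have hH0 : H 0 = 0 := by simp [hH, hk0, h0]
    choose g hg1 hg2 using fun n => exists_block H hHmono hH0 n
    obtain ⟨r, hr3, hrU⟩ : ∃ r, r < 3 ∧ {n | g n % 3 = r} ∈ U := by
      have h012 : {n | g n % 3 = 0} ∪ ({n | g n % 3 = 1} ∪ {n | g n % 3 = 2}) ∈ U := by
        refine mem_of_superset univ_mem ?_
        intro n _
        simp only [mem_union, mem_setOf_eq]
        omega
      rcases Ultrafilter.union_mem_iff.mp h012 with hmem | hmem
      · exact ⟨0, by norm_num, hmem⟩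
      rcases Ultrafilter.union_mem_iff.mp hmem with hmem | hmem
      · exact ⟨1, by norm_num, hmem⟩
      · exact ⟨2, by norm_num, hmem⟩
    set c := (r + 2) % 3 with hc
    have hc3 : c < 3 := by omega
    set a : Set ℕ := {m | ∃ j, j % 3 = c ∧ k j ≤ m ∧ m < k (j + 1)} with ha
    have hmem_a : ∀ j, j % 3 = c → k j ∈ a := by
      intro j hj
      have hjj : j < j + 1 := by omega
      exact ⟨j, hj, le_refl _, hkmono hjj⟩
    set A : Set ℕ := ⋃ n ∈ a, Set.Ico (h n) (h (n + 1)) with hA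
    have hHA : ∀ j, j % 3 = c → H j ∈ A := by
      intro j hj
      refine Set.mem_biUnion (hmem_a j hj) ?_
      exact ⟨le_refl _, hmono (by omega)⟩
    -- every element of A lies in a block
    have hAblock : ∀ x ∈ A, ∃ j', j' % 3 = c ∧ H j' ≤ x ∧ x < H (j' + 1) := by
      intro x hx
      rw [hA] at hx
      simp only [Set.mem_iUnion, Set.mem_Ico, exists_prop, ha, mem_setOf_eq] at hx
      obtain ⟨m, ⟨j', hj'c, hj'1, hj'2⟩, hx1, hx2⟩ := hx
      refine ⟨j', hj'c, ?_, ?_⟩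
      · exact le_trans (hmono.monotone hj'1) hx1
      · exact lt_of_lt_of_le hx2 (hmono.monotone (by omega))
    refine ⟨a, ?_, ?_, ?_⟩
    · refine Set.infinite_of_injective_forall_mem (f := fun n : ℕ => k (3 * n + c)) ?_ ?_
      · intro m n hmn
        have := hkmono.injective hmn
        omega
      · intro n
        exact hmem_a (3 * n + c) (by omega)
    · refine Set.infinite_of_injective_forall_mem (f := fun n : ℕ => H (3 * n + c)) ?_ ?_
      · intro m n hmn
        have := hHmono.injective hmn
        omega
      · intro n
        exact hHA (3 * n + c) (by omega)
    · refine mem_of_superset hrU ?_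
      intro n hn
      simp only [mem_setOf_eq] at hn ⊢
      set j := g n with hj
      have hjn1 : H j ≤ n := hg1 n
      have hjn2 : n < H (j + 1) := hg2 n
      -- lower bound for elements of A above n
      have hlow : ∀ x, x ∈ A ∧ n < x → H (j + 2) ≤ x := by
        rintro x ⟨hxA, hxn⟩
        obtain ⟨j', hj'c, hx1, hx2⟩ := hAblock x hxA
        have hlt : H j < H (j' + 1) := by omega
        have hjj' : j ≤ j' := by
          have := (hHmono.lt_iff_lt (a := j) (b := j' + 1)).mp hlt
          omega
        have hj2 : j + 2 ≤ j' := by omega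
        exact le_trans (hHmono.monotone hj2) hx1
      have hne : {x | x ∈ A ∧ n < x}.Nonempty := by
        refine ⟨H (3 * (j + 3) + c), hHA _ (by omega), ?_⟩
        have hle : j + 1 ≤ 3 * (j + 3) + c := by omega
        have := hHmono.monotone hle
        omega
      have hinf := Nat.sInf_mem hne
      have hfn : f n ≤ H (j + 2) := hkey (j + 1) n hjn2
      exact le_trans hfn (hlow _ hinf)
end

section
/- Assume that Y ⊆ [ℕ]^∞ is linearly quasiordered by ⊆*, and that Y = ⋃_{α<κ} Y_α for some cardinal κ < 𝔱, where each Y_α has a pseudo-intersection. Then Y has a pseudo-intersection. -/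
open Set Filter

/-- The tower number `𝔱`: the least cardinality of a family of infinite subsets of `ℕ`,
linearly quasiordered by `⊆*`, with no pseudo-intersection. -/
noncomputable def frakt : Cardinal :=
  sInf {c : Cardinal | ∃ Y : Set (Set ℕ),
    (∀ a ∈ Y, a.Infinite) ∧
    (∀ y ∈ Y, ∀ z ∈ Y, (y \ z).Finite ∨ (z \ y).Finite) ∧
    (¬ ∃ a : Set ℕ, a.Infinite ∧ ∀ y ∈ Y, (a \ y).Finite) ∧
    c = Cardinal.mk Y}

lemma frakt_aux (Z : Set (Set ℕ)) (hZinf : ∀ a ∈ Z, a.Infinite)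
    (hZlin : ∀ y ∈ Z, ∀ z ∈ Z, (y \ z).Finite ∨ (z \ y).Finite)
    (hZ : Cardinal.mk Z < frakt) :
    ∃ a : Set ℕ, a.Infinite ∧ ∀ y ∈ Z, (a \ y).Finite := by
  by_contra h
  have hmem : Cardinal.mk Z ∈ {c : Cardinal | ∃ Y : Set (Set ℕ),
      (∀ a ∈ Y, a.Infinite) ∧
      (∀ y ∈ Y, ∀ z ∈ Y, (y \ z).Finite ∨ (z \ y).Finite) ∧
      (¬ ∃ a : Set ℕ, a.Infinite ∧ ∀ y ∈ Y, (a \ y).Finite) ∧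
      c = Cardinal.mk Y} := ⟨Z, hZinf, hZlin, h, rfl⟩
  exact absurd (csInf_le' hmem) (not_le.mpr hZ)

lemma diff_trans {a z y : Set ℕ} (h1 : (a \ z).Finite) (h2 : (z \ y).Finite) :
    (a \ y).Finite := by
  refine (h1.union h2).subset fun n hn => ?_
  by_cases h : n ∈ z <;> simp_all [Set.mem_diff]

/-- If `Y ⊆ [ℕ]^∞` is linearly quasiordered by `⊆*` and is the union of fewer than `𝔱`
many subfamilies, each having a pseudo-intersection, then `Y` has a
pseudo-intersection. -/
theorem stmt19 (ι : Type) (hι : Cardinal.mk ι < frakt)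
    (Y : ι → Set (Set ℕ))
    (hinf : ∀ i, ∀ a ∈ Y i, a.Infinite)
    (hlin : ∀ y ∈ ⋃ i, Y i, ∀ z ∈ ⋃ i, Y i, (y \ z).Finite ∨ (z \ y).Finite)
    (hpi : ∀ i, ∃ a : Set ℕ, a.Infinite ∧ ∀ y ∈ Y i, (a \ y).Finite) :
    ∃ a : Set ℕ, a.Infinite ∧ ∀ y ∈ ⋃ i, Y i, (a \ y).Finite := by
  by_cases hne : (⋃ i, Y i).Nonempty
  · by_cases hco : ∃ i, ∀ y ∈ ⋃ i, Y i, ∃ z ∈ Y i, (z \ y).Finite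
    · obtain ⟨i, hi⟩ := hco
      obtain ⟨a, ha, hpa⟩ := hpi i
      refine ⟨a, ha, fun y hy => ?_⟩
      obtain ⟨z, hz, hzy⟩ := hi y hy
      exact diff_trans (hpa z hz) hzy
    · push_neg at hco
      choose g hg1 hg2 using hco
      have hgz : ∀ i, ∀ z ∈ Y i, (g i \ z).Finite := by
        intro i z hz
        rcases hlin (g i) (hg1 i) z (Set.mem_iUnion.mpr ⟨i, hz⟩) with h | h
        · exact h
        · exact absurd h (hg2 i z hz)
      have hcard : Cardinal.mk (Set.range g) < frakt :=
        lt_of_le_of_lt Cardinal.mk_range_le hι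
      obtain ⟨a, ha, hpa⟩ := frakt_aux (Set.range g)
        (by rintro _ ⟨i, rfl⟩; exact hinf _ _ (Set.mem_iUnion.mp (hg1 i)).choose_spec)
        (by rintro _ ⟨i, rfl⟩ _ ⟨j, rfl⟩; exact hlin _ (hg1 i) _ (hg1 j))
        hcard
      refine ⟨a, ha, fun y hy => ?_⟩
      obtain ⟨i, hi⟩ := Set.mem_iUnion.mp hy
      exact diff_trans (hpa (g i) ⟨i, rfl⟩) (hgz i y hi)
  · exact ⟨Set.univ, Set.infinite_univ, fun y hy => absurd ⟨y, hy⟩ hne⟩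
end
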